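/- arXiv:1404.7813 — 11 statements merged into one kernel-verified Lean document; each statement's English description precedes it below -/
import Mathlib

section
/- Let S ⊂ ℝⁿ be a closed, convex set whose recession cone is pointed, and let S₁ = {x ∈ S : c₁ᵀx ≥ c₁₀} and S₂ = {x ∈ S : c₂ᵀx ≥ c₂₀}. Suppose S₁ ⊄ S₂ and S₂ ⊄ S₁. Then S₁ ∪ S₂ is not convex unless S₁ ∪ S₂ = S. -/
open Set

/-- Dot product on `Fin n → ℝ`. -/
def dot {n : ℕ} (c x : Fin n → ℝ) : ℝ := ∑ i, c i * x i

/-- Recession cone of a set `S ⊆ ℝⁿ`. -/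
def recCone {n : ℕ} (S : Set (Fin n → ℝ)) : Set (Fin n → ℝ) :=
  {r | ∀ x ∈ S, ∀ t : ℝ, 0 ≤ t → x + t • r ∈ S}

lemma dot_comb {n : ℕ} (c x y : Fin n → ℝ) (a b : ℝ) :
    dot c (a • x + b • y) = a * dot c x + b * dot c y := by
  simp only [dot, Pi.add_apply, Pi.smul_apply, smul_eq_mul]
  rw [Finset.mul_sum, Finset.mul_sum, ← Finset.sum_add_distrib]
  exact Finset.sum_congr rfl fun i _ => by ring

theorem stmt_0 {n : ℕ} (S : Set (Fin n → ℝ))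
    (hSclosed : IsClosed S) (hSconv : Convex ℝ S)
    (hSpointed : ∀ r, r ∈ recCone S → -r ∈ recCone S → r = 0)
    (c₁ c₂ : Fin n → ℝ) (c₁₀ c₂₀ : ℝ)
    (S₁ S₂ : Set (Fin n → ℝ))
    (hS₁ : S₁ = {x ∈ S | c₁₀ ≤ dot c₁ x})
    (hS₂ : S₂ = {x ∈ S | c₂₀ ≤ dot c₂ x})
    (h12 : ¬ S₁ ⊆ S₂) (h21 : ¬ S₂ ⊆ S₁)
    (hne : S₁ ∪ S₂ ≠ S) :
    ¬ Convex ℝ (S₁ ∪ S₂) := by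
  intro hconv
  subst hS₁ hS₂
  -- a point z of S outside the union
  have hsub : {x ∈ S | c₁₀ ≤ dot c₁ x} ∪ {x ∈ S | c₂₀ ≤ dot c₂ x} ⊆ S := by
    rintro x (⟨hx, -⟩ | ⟨hx, -⟩) <;> exact hx
  obtain ⟨z, hzS, hz⟩ := Set.not_subset.mp (fun h => hne (hsub.antisymm h))
  simp only [Set.mem_union, Set.mem_setOf_eq, not_or, not_and, not_le] at hz
  have hz1 := hz.1 hzS
  have hz2 := hz.2 hzS
  -- a ∈ S₁ \ S₂
  obtain ⟨a, ha1, ha2⟩ := Set.not_subset.mp h12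
  simp only [Set.mem_setOf_eq, not_and, not_le] at ha1 ha2
  obtain ⟨haS, ha1⟩ := ha1
  have ha2 : dot c₂ a < c₂₀ := ha2 haS
  -- b ∈ S₂ \ S₁
  obtain ⟨b, hb2, hb1⟩ := Set.not_subset.mp h21
  simp only [Set.mem_setOf_eq, not_and, not_le] at hb2 hb1
  obtain ⟨hbS, hb2⟩ := hb2
  have hb1 : dot c₁ b < c₁₀ := hb1 hbS
  -- slide a toward z to hit the hyperplane c₁ᵀx = c₁₀
  set da : ℝ := dot c₁ a - dot c₁ z with hda
  have hda0 : 0 < da := by simp only [hda]; linarith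
  set l : ℝ := (dot c₁ a - c₁₀) / da with hl
  have hl0 : 0 ≤ l := div_nonneg (by linarith) hda0.le
  have hl1 : l ≤ 1 := by
    rw [hl, div_le_one hda0]; simp only [hda]; linarith
  set a' : Fin n → ℝ := (1 - l) • a + l • z with ha'
  have ha'S : a' ∈ S := hSconv haS hzS (by linarith) hl0 (by ring)
  have ha'1 : dot c₁ a' = c₁₀ := by
    rw [ha', dot_comb, hl]
    field_simp
    ring
  have ha'2 : dot c₂ a' < c₂₀ := by
    rw [ha', dot_comb]
    nlinarith [mul_nonneg hl0 (sub_pos.mpr hz2).le, mul_nonneg (sub_nonneg.mpr hl1) (sub_pos.mpr ha2).le]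
  -- slide b toward z to hit the hyperplane c₂ᵀx = c₂₀
  set db : ℝ := dot c₂ b - dot c₂ z with hdb
  have hdb0 : 0 < db := by simp only [hdb]; linarith
  set m : ℝ := (dot c₂ b - c₂₀) / db with hm
  have hm0 : 0 ≤ m := div_nonneg (by linarith) hdb0.le
  have hm1 : m ≤ 1 := by
    rw [hm, div_le_one hdb0]; simp only [hdb]; linarith
  set b' : Fin n → ℝ := (1 - m) • b + m • z with hb'
  have hb'S : b' ∈ S := hSconv hbS hzS (by linarith) hm0 (by ring)
  have hb'2 : dot c₂ b' = c₂₀ := by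
    rw [hb', dot_comb, hm]
    field_simp
    ring
  have hb'1 : dot c₁ b' < c₁₀ := by
    rw [hb', dot_comb]
    nlinarith [mul_nonneg hm0 (sub_pos.mpr hz1).le, mul_nonneg (sub_nonneg.mpr hm1) (sub_pos.mpr hb1).le]
  -- the midpoint of a' and b' is in neither set, contradicting convexity
  have ha'U : a' ∈ {x ∈ S | c₁₀ ≤ dot c₁ x} ∪ {x ∈ S | c₂₀ ≤ dot c₂ x} :=
    Or.inl ⟨ha'S, ha'1.ge⟩
  have hb'U : b' ∈ {x ∈ S | c₁₀ ≤ dot c₁ x} ∪ {x ∈ S | c₂₀ ≤ dot c₂ x} :=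
    Or.inr ⟨hb'S, hb'2.ge⟩
  have hmid := hconv ha'U hb'U (by norm_num : (0:ℝ) ≤ 1/2) (by norm_num : (0:ℝ) ≤ 1/2) (by norm_num)
  have h1 : dot c₁ ((1/2 : ℝ) • a' + (1/2 : ℝ) • b') < c₁₀ := by
    rw [dot_comb]; linarith
  have h2 : dot c₂ ((1/2 : ℝ) • a' + (1/2 : ℝ) • b') < c₂₀ := by
    rw [dot_comb]; linarith
  rcases hmid with ⟨-, h⟩ | ⟨-, h⟩ <;> linarith
end

section
/- Let S ⊂ ℝⁿ be a closed, convex, pointed set and S₁ = {x ∈ S : c₁ᵀx ≥ c₁₀}, S₂ = {x ∈ S : c₂ᵀx ≥ c₂₀} with S₁ ⊄ S₂ and S₂ ⊄ S₁. Then the closed convex hull of S₁ ∪ S₂ equals conv(S₁⁺ ∪ S₂⁺), where S₁⁺ := S₁ + rec S₂ and S₂⁺ := S₂ + rec S₁ (rec denotes the recession cone). -/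
open Set Pointwise

/-!
The inclusion `⊇` holds because the closed convex set `closure (conv (S₁ ∪ S₂))` contains `S₁`
and `S₂`, hence has all their recession directions. For `⊆`, write a point of the closure as the
limit of `(1 - θₖ) xₖ + θₖ yₖ` with `xₖ ∈ S₁`, `yₖ ∈ S₂`. If both summands stay bounded, then
along a subsequence each converges either to a point of `(1 - θ) S₁` (resp. `θ S₂`) or, when its
weight tends to `0`, to a recession direction; either way the limit lies in
`conv (S₁⁺ ∪ S₂⁺)`. If they are unbounded, normalising them produces `r ≠ 0` with
`r ∈ rec S₁ ⊆ rec S` and `-r ∈ rec S₂ ⊆ rec S`, which pointedness of `S` forbids.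
-/

open Filter Topology

theorem isClosed_sep_le_dot {n : ℕ} {S : Set (Fin n → ℝ)} (hS : IsClosed S) (c : Fin n → ℝ)
    (c₀ : ℝ) : IsClosed {x ∈ S | c₀ ≤ dot c x} :=
  hS.inter (isClosed_le continuous_const (continuous_const.dotProduct continuous_id))

theorem convex_sep_le_dot {n : ℕ} {S : Set (Fin n → ℝ)} (hS : Convex ℝ S) (c : Fin n → ℝ)
    (c₀ : ℝ) : Convex ℝ {x ∈ S | c₀ ≤ dot c x} :=
  hS.inter (convex_halfSpace_ge ⟨dotProduct_add c, fun s x => dotProduct_smul s c x⟩ c₀)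

theorem inv_smul_mem_of_tendsto_smul {ι E : Type*} [AddCommGroup E] [Module ℝ E]
    [TopologicalSpace E] [ContinuousSMul ℝ E] {l : Filter ι} [l.NeBot] {A : Set E}
    (hA : IsClosed A) {x : ι → E} (hx : ∀ᶠ i in l, x i ∈ A) {θ : ι → ℝ} {t : ℝ}
    (hθ : Tendsto θ l (𝓝 t)) (ht : t ≠ 0) {u : E} (hu : Tendsto (fun i => θ i • x i) l (𝓝 u)) :
    t⁻¹ • u ∈ A := by
  refine hA.mem_of_tendsto ((hθ.inv₀ ht).smul hu) ?_
  filter_upwards [hx, hθ.eventually_ne ht] with i hxi hθi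
  rwa [inv_smul_smul₀ hθi]

theorem exists_subseq_tendsto_or_inv_norm_smul_tendsto {E : Type*} [NormedAddCommGroup E]
    [NormedSpace ℝ E] [ProperSpace E] (a : ℕ → E) :
    (∃ φ : ℕ → ℕ, StrictMono φ ∧ ∃ u, Tendsto (a ∘ φ) atTop (𝓝 u)) ∨
      ∃ φ : ℕ → ℕ, StrictMono φ ∧ Tendsto (fun k => ‖a (φ k)‖⁻¹) atTop (𝓝 0) ∧
        ∃ u ≠ 0, Tendsto (fun k => ‖a (φ k)‖⁻¹ • a (φ k)) atTop (𝓝 u) := by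
  by_cases hbdd : ∃ R, ∃ᶠ k in atTop, a k ∈ Metric.closedBall 0 R
  · obtain ⟨R, hR⟩ := hbdd
    obtain ⟨u, -, φ, hφ, hu⟩ := tendsto_subseq_of_frequently_bounded Metric.isBounded_closedBall hR
    exact Or.inl ⟨φ, hφ, u, hu⟩
  push Not at hbdd
  have hnorm : Tendsto (fun k => ‖a k‖) atTop atTop :=
    tendsto_atTop.2 fun R => (hbdd R).mono fun k hk => by
      simpa using (not_le.1 (by simpa using hk)).le
  have hunit : ∀ k, ‖a k‖⁻¹ • a k ∈ Metric.closedBall (0 : E) 1 := fun k => by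
    rcases eq_or_ne (a k) 0 with hk | hk
    · simp [hk]
    · rw [Metric.mem_closedBall, dist_zero_right, norm_smul, norm_inv, norm_norm,
        inv_mul_cancel₀ (norm_ne_zero_iff.2 hk)]
  obtain ⟨u, -, φ, hφ, hu⟩ := tendsto_subseq_of_bounded Metric.isBounded_closedBall hunit
  have hnormφ := hnorm.comp hφ.tendsto_atTop
  refine Or.inr ⟨φ, hφ, tendsto_inv_atTop_zero.comp hnormφ, u, ?_, hu⟩
  have hone : Tendsto (fun k => ‖‖a (φ k)‖⁻¹ • a (φ k)‖) atTop (𝓝 1) :=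
    tendsto_const_nhds.congr' <| (hnormφ.eventually_gt_atTop 0).mono fun k hk => by
      simp only [Function.comp_apply] at hk ⊢
      rw [norm_smul, norm_inv, norm_norm, inv_mul_cancel₀ hk.ne']
  rintro rfl
  simpa using tendsto_nhds_unique hu.norm hone

section recCone

variable {n : ℕ} {A B : Set (Fin n → ℝ)}

theorem zero_mem_recCone (A : Set (Fin n → ℝ)) : (0 : Fin n → ℝ) ∈ recCone A := by
  intro x hx t _
  simpa using hx

theorem add_mem_of_mem_recCone {x r : Fin n → ℝ} (hx : x ∈ A) (hr : r ∈ recCone A) :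
    x + r ∈ A := by
  simpa using hr x hx 1 zero_le_one

theorem mem_recCone_of_tendsto_smul {ι : Type*} {l : Filter ι} [l.NeBot] (hA : IsClosed A)
    (hAc : Convex ℝ A) {x : ι → Fin n → ℝ} (hx : ∀ᶠ i in l, x i ∈ A) {s : ι → ℝ}
    (hs₀ : ∀ᶠ i in l, 0 ≤ s i) (hs : Tendsto s l (𝓝 0)) {u : Fin n → ℝ}
    (hu : Tendsto (fun i => s i • x i) l (𝓝 u)) : u ∈ recCone A := by
  intro y hy t ht
  have hts : Tendsto (fun i => t * s i) l (𝓝 0) := by simpa using hs.const_mul t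
  have hlim : Tendsto (fun i => (1 - t * s i) • y + t • (s i • x i)) l (𝓝 (y + t • u)) := by
    simpa using (((tendsto_const_nhds (x := (1 : ℝ))).sub hts).smul_const y).add (hu.const_smul t)
  refine hA.mem_of_tendsto hlim ?_
  filter_upwards [hx, hs₀, hts.eventually_le_const zero_lt_one] with i hxi hsi hti
  rw [smul_smul]
  exact hAc hy hxi (by linarith) (mul_nonneg ht hsi) (by ring)

theorem recCone_subset_recCone (hB : IsClosed B) (hBc : Convex ℝ B) (hAB : A ⊆ B)
    (hA : A.Nonempty) : recCone A ⊆ recCone B := by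
  obtain ⟨y, hy⟩ := hA
  intro r hr
  have hlim : Tendsto (fun t : ℝ => t⁻¹ • y + r) atTop (𝓝 r) := by
    simpa using ((tendsto_inv_atTop_zero (𝕜 := ℝ)).smul_const y).add_const r
  refine mem_recCone_of_tendsto_smul hB hBc (x := fun t => y + t • r)
    ((eventually_ge_atTop 0).mono fun t ht => hAB (hr y hy t ht))
    ((eventually_ge_atTop 0).mono fun t ht => inv_nonneg.2 ht) tendsto_inv_atTop_zero
    (hlim.congr' ((eventually_gt_atTop 0).mono fun t ht => ?_))
  simp only [smul_add, smul_smul, inv_mul_cancel₀ ht.ne', one_smul]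

theorem add_recCone_subset {K : Set (Fin n → ℝ)} (hK : IsClosed K) (hKc : Convex ℝ K)
    (hA : A ⊆ K) (hB : B ⊆ K) (hB₀ : B.Nonempty) : A + recCone B ⊆ K := by
  rintro _ ⟨x, hx, r, hr, rfl⟩
  exact add_mem_of_mem_recCone (hA hx) (recCone_subset_recCone hK hKc hB hB₀ hr)

theorem convexHull_union_add_recCone_subset_closure (hA₀ : A.Nonempty) (hB₀ : B.Nonempty) :
    convexHull ℝ ((A + recCone B) ∪ (B + recCone A)) ⊆ closure (convexHull ℝ (A ∪ B)) := by
  have hK := (convex_convexHull ℝ (A ∪ B)).closure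
  have hsub : A ∪ B ⊆ closure (convexHull ℝ (A ∪ B)) :=
    (subset_convexHull ℝ _).trans subset_closure
  refine convexHull_min (union_subset ?_ ?_) hK
  · exact add_recCone_subset isClosed_closure hK (subset_union_left.trans hsub)
      (subset_union_right.trans hsub) hB₀
  · exact add_recCone_subset isClosed_closure hK (subset_union_right.trans hsub)
      (subset_union_left.trans hsub) hA₀

theorem add_mem_convexHull_of_tendsto (hA : IsClosed A) (hAc : Convex ℝ A) (hB : IsClosed B)
    (hBc : Convex ℝ B) {x y : ℕ → Fin n → ℝ} (hx : ∀ k, x k ∈ A) (hy : ∀ k, y k ∈ B)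
    {θ : ℕ → ℝ} (hθ : ∀ k, θ k ∈ Icc (0 : ℝ) 1) {t : ℝ} (ht : Tendsto θ atTop (𝓝 t))
    {u v : Fin n → ℝ} (hu : Tendsto (fun k => (1 - θ k) • x k) atTop (𝓝 u))
    (hv : Tendsto (fun k => θ k • y k) atTop (𝓝 v)) :
    u + v ∈ convexHull ℝ ((A + recCone B) ∪ (B + recCone A)) := by
  have ht' : Tendsto (fun k => 1 - θ k) atTop (𝓝 (1 - t)) := tendsto_const_nhds.sub ht
  rcases eq_or_ne t 0 with rfl | ht₀
  · have hvB : v ∈ recCone B := mem_recCone_of_tendsto_smul hB hBc (.of_forall hy)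
      (.of_forall fun k => (hθ k).1) ht hv
    have huA : (1 - 0 : ℝ)⁻¹ • u ∈ A :=
      inv_smul_mem_of_tendsto_smul hA (.of_forall hx) ht' (by norm_num) hu
    rw [sub_zero, inv_one, one_smul] at huA
    exact subset_convexHull ℝ _ (Or.inl (add_mem_add huA hvB))
  rcases eq_or_ne t 1 with rfl | ht₁
  · have huA : u ∈ recCone A := mem_recCone_of_tendsto_smul hA hAc (.of_forall hx)
      (.of_forall fun k => sub_nonneg.2 (hθ k).2) (by simpa using ht') hu
    have hvB : (1 : ℝ)⁻¹ • v ∈ B :=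
      inv_smul_mem_of_tendsto_smul hB (.of_forall hy) ht one_ne_zero hv
    rw [inv_one, one_smul] at hvB
    exact subset_convexHull ℝ _ (Or.inr (add_comm u v ▸ add_mem_add hvB huA))
  have hut : (1 - t)⁻¹ • u ∈ A :=
    inv_smul_mem_of_tendsto_smul hA (.of_forall hx) ht' (sub_ne_zero.2 ht₁.symm) hu
  have hvt : t⁻¹ • v ∈ B := inv_smul_mem_of_tendsto_smul hB (.of_forall hy) ht ht₀ hv
  have ht01 : t ∈ Icc (0 : ℝ) 1 := isClosed_Icc.mem_of_tendsto ht (.of_forall hθ)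
  have hcombo := convex_convexHull ℝ ((A + recCone B) ∪ (B + recCone A))
    (subset_convexHull ℝ _ (Or.inl (subset_add_left A (zero_mem_recCone B) hut)))
    (subset_convexHull ℝ _ (Or.inr (subset_add_left B (zero_mem_recCone A) hvt)))
    (sub_nonneg.2 ht01.2) ht01.1 (sub_add_cancel 1 t)
  rwa [smul_inv_smul₀ (sub_ne_zero.2 ht₁.symm), smul_inv_smul₀ ht₀] at hcombo

theorem closure_convexHull_union_subset (hA : IsClosed A) (hAc : Convex ℝ A) (hB : IsClosed B)
    (hBc : Convex ℝ B) (hA₀ : A.Nonempty) (hB₀ : B.Nonempty)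
    (hAB : ∀ r ∈ recCone A, -r ∈ recCone B → r = 0) :
    closure (convexHull ℝ (A ∪ B)) ⊆ convexHull ℝ ((A + recCone B) ∪ (B + recCone A)) := by
  intro z hz
  rw [hAc.convexHull_union hBc hA₀ hB₀, mem_closure_iff_seq_limit] at hz
  obtain ⟨w, hw, hwz⟩ := hz
  choose x hx y hy θ hθ hxy using fun k => by
    simpa only [mem_convexJoin, segment_eq_image, mem_image] using hw k
  obtain ⟨t, -, ψ, hψ, hθψ⟩ := isCompact_Icc.tendsto_subseq hθ
  set u := fun k => (1 - θ (ψ k)) • x (ψ k)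
  have hv : ∀ k, θ (ψ k) • y (ψ k) = w (ψ k) - u k := fun k => by
    rw [← hxy]; abel
  rcases exists_subseq_tendsto_or_inv_norm_smul_tendsto u with
    ⟨φ, hφ, U, hU⟩ | ⟨φ, hφ, hs, U, hU₀, hU⟩
  · have hV : Tendsto (fun k => θ (ψ (φ k)) • y (ψ (φ k))) atTop (𝓝 (z - U)) := by
      simp only [hv]
      exact (hwz.comp (hψ.comp hφ).tendsto_atTop).sub hU
    simpa using add_mem_convexHull_of_tendsto hA hAc hB hBc (fun k => hx _) (fun k => hy _)
      (fun k => hθ _) (hθψ.comp hφ.tendsto_atTop) hU hV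
  · have hψφ := (hψ.comp hφ).tendsto_atTop
    have hθψφ := hθψ.comp hφ.tendsto_atTop
    refine absurd (hAB U ?_ ?_) hU₀
    · refine mem_recCone_of_tendsto_smul hA hAc (x := fun k => x (ψ (φ k)))
        (s := fun k => ‖u (φ k)‖⁻¹ * (1 - θ (ψ (φ k)))) (.of_forall fun k => hx _)
        (.of_forall fun k => mul_nonneg (inv_nonneg.2 (norm_nonneg _)) (sub_nonneg.2 (hθ _).2))
        (by simpa using hs.mul (tendsto_const_nhds.sub hθψφ)) ?_
      exact hU.congr fun k => by simp only [u, smul_smul]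
    · refine mem_recCone_of_tendsto_smul hB hBc (x := fun k => y (ψ (φ k)))
        (s := fun k => ‖u (φ k)‖⁻¹ * θ (ψ (φ k))) (.of_forall fun k => hy _)
        (.of_forall fun k => mul_nonneg (inv_nonneg.2 (norm_nonneg _)) (hθ _).1)
        (by simpa using hs.mul hθψφ) ?_
      have hlim := (hs.smul (hwz.comp hψφ)).sub hU
      rw [zero_smul, zero_sub] at hlim
      exact hlim.congr fun k => by simp only [Function.comp_apply, ← smul_sub, ← hv, smul_smul]

end recCone

theorem stmt_1 {n : ℕ} (S : Set (Fin n → ℝ))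
    (hSclosed : IsClosed S) (hSconv : Convex ℝ S)
    (hSpointed : ∀ r, r ∈ recCone S → -r ∈ recCone S → r = 0)
    (c₁ c₂ : Fin n → ℝ) (c₁₀ c₂₀ : ℝ)
    (S₁ S₂ : Set (Fin n → ℝ))
    (hS₁ : S₁ = {x ∈ S | c₁₀ ≤ dot c₁ x})
    (hS₂ : S₂ = {x ∈ S | c₂₀ ≤ dot c₂ x})
    (h12 : ¬ S₁ ⊆ S₂) (h21 : ¬ S₂ ⊆ S₁) :
    closure (convexHull ℝ (S₁ ∪ S₂)) =
      convexHull ℝ ((S₁ + recCone S₂) ∪ (S₂ + recCone S₁)) := by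
  obtain ⟨x₁, hx₁, -⟩ := not_subset.1 h12
  obtain ⟨x₂, hx₂, -⟩ := not_subset.1 h21
  have hS₁S : S₁ ⊆ S := hS₁ ▸ sep_subset S _
  have hS₂S : S₂ ⊆ S := hS₂ ▸ sep_subset S _
  have hopposite : ∀ r ∈ recCone S₁, -r ∈ recCone S₂ → r = 0 := fun r hr hr' =>
    hSpointed r (recCone_subset_recCone hSclosed hSconv hS₁S ⟨x₁, hx₁⟩ hr)
      (recCone_subset_recCone hSclosed hSconv hS₂S ⟨x₂, hx₂⟩ hr')
  refine (closure_convexHull_union_subset ?_ ?_ ?_ ?_ ⟨x₁, hx₁⟩ ⟨x₂, hx₂⟩ hopposite).antisymm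
    (convexHull_union_add_recCone_subset_closure ⟨x₁, hx₁⟩ ⟨x₂, hx₂⟩)
  · exact hS₁ ▸ isClosed_sep_le_dot hSclosed c₁ c₁₀
  · exact hS₁ ▸ convex_sep_le_dot hSconv c₁ c₁₀
  · exact hS₂ ▸ isClosed_sep_le_dot hSclosed c₂ c₂₀
  · exact hS₂ ▸ convex_sep_le_dot hSconv c₂ c₂₀
end

section
/- Let K ⊆ ℝⁿ be a regular (full-dimensional, closed, convex, pointed) cone with dual cone K*, and let C₁ = {x ∈ K : c₁ᵀx ≥ c₁₀}, C₂ = {x ∈ K : c₂ᵀx ≥ c₂₀} with C₁ ⊄ C₂ and C₂ ⊄ C₁. Then there is no β ≥ 0 satisfying both β c₁₀ ≥ c₂₀ and c₂ − β c₁ ∈ K*. -/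
open Set

/-- Dual cone of a set `K ⊆ ℝⁿ`. -/
def dualCone {n : ℕ} (K : Set (Fin n → ℝ)) : Set (Fin n → ℝ) :=
  {y | ∀ x ∈ K, 0 ≤ dot y x}

theorem stmt_2 {n : ℕ} (K : Set (Fin n → ℝ))
    (hKclosed : IsClosed K) (hKconv : Convex ℝ K)
    (hKcone : ∀ x ∈ K, ∀ t : ℝ, 0 ≤ t → t • x ∈ K)
    (hKpointed : ∀ x, x ∈ K → -x ∈ K → x = 0)
    (hKfull : (interior K).Nonempty)
    (c₁ c₂ : Fin n → ℝ) (c₁₀ c₂₀ : ℝ)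
    (C₁ C₂ : Set (Fin n → ℝ))
    (hC₁ : C₁ = {x ∈ K | c₁₀ ≤ dot c₁ x})
    (hC₂ : C₂ = {x ∈ K | c₂₀ ≤ dot c₂ x})
    (h12 : ¬ C₁ ⊆ C₂) (h21 : ¬ C₂ ⊆ C₁) :
    ¬ ∃ β : ℝ, 0 ≤ β ∧ c₂₀ ≤ β * c₁₀ ∧ c₂ - β • c₁ ∈ dualCone K := by
  rintro ⟨β, hβ, hβc, hdual⟩
  apply h12
  intro x hx
  rw [hC₁] at hx
  obtain ⟨hxK, hx1⟩ := hx
  rw [hC₂]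
  refine ⟨hxK, ?_⟩
  have h0 := hdual x hxK
  have hsplit : dot (c₂ - β • c₁) x = dot c₂ x - β * dot c₁ x := by
    simp [dot, Finset.mul_sum, ← Finset.sum_sub_distrib, sub_mul, mul_assoc]
  rw [hsplit] at h0
  have : β * c₁₀ ≤ β * dot c₁ x := mul_le_mul_of_nonneg_left hx1 hβ
  linarith
end

section
/- Let K ⊆ ℝⁿ be a regular cone with dual K*, C₁ and C₂ strictly feasible sets defined by a two-term disjunction on K with c₁₀, c₂₀ ∈ {0, ±1}, C₁ ⊄ C₂ and C₂ ⊄ C₁. Then a linear inequality μᵀx ≥ μ₀ is valid for the closed convex hull of C₁ ∪ C₂ if and only if there exist α₁, α₂ ∈ K* and β₁, β₂ ≥ 0 such that μ = α₁ + β₁c₁ = α₂ + β₂c₂, β₁c₁₀ ≥ μ₀, and β₂c₂₀ ≥ μ₀. -/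
open Set

/-!
Validity for `clconv (C₁ ∪ C₂)` is validity on each `Cᵢ` separately, so the theorem reduces to
a conic Farkas lemma for one halfspace: if `μᵀx ≥ μ₀` holds on `{x ∈ K | cᵀx ≥ c₀}` and this set
meets `int K`, then `μ = α + β c` with `α ∈ K*`, `β ≥ 0`, `β c₀ ≥ μ₀`.

That lemma comes from a Lagrange multiplier: with a Slater point `g x₀ > 0`, a convex `f` that is
nonnegative wherever the concave `g` is satisfies `f ≥ β g` for some `β ≥ 0` (for
`g x = cᵀx - c₀` with `c ≠ 0`, pushing an interior point in the direction `c` gives `x₀`). No separation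
theorem is needed: along the segment from a point with `g < 0` to one with `g > 0` there is a
point with `g ≥ 0`, which forces every ratio `f / g` on `{g < 0}` below every ratio on
`{g > 0}`, and `β` is taken between them. Finally, a linear functional bounded below by
`μ₀ - β c₀` on the cone `K` is nonnegative there, and the bound is at most its value `0` at `0`.
-/

open Matrix Filter Topology

section LagrangeMultiplier

variable {E : Type*} [AddCommGroup E] [Module ℝ E] {S : Set E} {f g : E → ℝ}

theorem ConvexOn.div_le_div_of_neg_of_pos (hf : ConvexOn ℝ S f) (hg : ConcaveOn ℝ S g)
    (hfg : ∀ x ∈ S, 0 ≤ g x → 0 ≤ f x) {x y : E} (hx : x ∈ S) (hy : y ∈ S)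
    (hgx : g x < 0) (hgy : 0 < g y) : f x / g x ≤ f y / g y := by
  set d := g y - g x
  have hd : 0 < d := by linarith
  set a := g y / d
  set b := -g x / d
  have ha : 0 ≤ a := div_nonneg hgy.le hd.le
  have hb : 0 ≤ b := div_nonneg (by linarith) hd.le
  have hab : a + b = 1 := by
    simp only [a, b]
    rw [← add_div, div_eq_one_iff_eq hd.ne']
    ring
  have hgz : 0 ≤ g (a • x + b • y) := by
    calc 0 = a • g x + b • g y := by simp only [smul_eq_mul, a, b]; field_simp; ring
      _ ≤ g (a • x + b • y) := hg.2 hx hy ha hb hab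
  have hfz : 0 ≤ a • f x + b • f y :=
    (hfg _ (hg.1 hx hy ha hb hab) hgz).trans (hf.2 hx hy ha hb hab)
  have hcross : f y * g x ≤ f x * g y := by
    have hcomb : a • f x + b • f y = (f x * g y - f y * g x) / d := by
      simp only [smul_eq_mul, a, b]; ring
    rw [hcomb, le_div_iff₀ hd] at hfz
    linarith
  rw [div_le_iff_of_neg hgx, div_mul_eq_mul_div, div_le_iff₀ hgy]
  exact hcross

theorem ConvexOn.exists_lagrange_multiplier (hf : ConvexOn ℝ S f) (hg : ConcaveOn ℝ S g)
    (hfg : ∀ x ∈ S, 0 ≤ g x → 0 ≤ f x) {x₀ : E} (hx₀ : x₀ ∈ S) (hgx₀ : 0 < g x₀) :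
    ∃ β : ℝ, 0 ≤ β ∧ ∀ x ∈ S, β * g x ≤ f x := by
  set R := (fun x => f x / g x) '' {x ∈ S | g x < 0}
  have hR : ∀ r ∈ R, ∀ y ∈ S, 0 < g y → r ≤ f y / g y := by
    rintro _ ⟨x, ⟨hx, hgx⟩, rfl⟩ y hy hgy
    exact hf.div_le_div_of_neg_of_pos hg hfg hx hy hgx hgy
  refine ⟨max (sSup R) 0, le_max_right _ _, fun x hx => ?_⟩
  rcases lt_trichotomy (g x) 0 with hgx | hgx | hgx
  · have hle : f x / g x ≤ sSup R :=
      le_csSup ⟨_, fun r hr => hR r hr x₀ hx₀ hgx₀⟩ ⟨x, ⟨hx, hgx⟩, rfl⟩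
    exact (div_le_iff_of_neg hgx).1 (hle.trans (le_max_left _ _))
  · rw [hgx, mul_zero]
    exact hfg x hx hgx.ge
  · have hfx : 0 ≤ f x / g x := div_nonneg (hfg x hx hgx.le) hgx.le
    exact (le_div_iff₀ hgx).1 (max_le (Real.sSup_le (fun r hr => hR r hr x hx hgx) hfx) hfx)

end LagrangeMultiplier

section ConicFarkas

variable {n : ℕ} {K : Set (Fin n → ℝ)}

theorem dot_eq_dotProduct (c x : Fin n → ℝ) : dot c x = c ⬝ᵥ x := rfl

theorem exists_dot_lt_of_mem_interior {x₀ c : Fin n → ℝ} (hx₀ : x₀ ∈ interior K) (hc : c ≠ 0) :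
    ∃ x ∈ K, dot c x₀ < dot c x := by
  have hcc : 0 < c ⬝ᵥ c :=
    lt_of_le_of_ne (Fintype.sum_nonneg fun i => mul_self_nonneg (c i))
      (Ne.symm (dotProduct_self_eq_zero.not.2 hc))
  have hline : Tendsto (fun t : ℝ => x₀ + t • c) (𝓝[>] 0) (𝓝 x₀) := by
    have hcont : Continuous fun t : ℝ => x₀ + t • c :=
      continuous_const.add (continuous_id.smul continuous_const)
    simpa using (hcont.tendsto 0).mono_left nhdsWithin_le_nhds
  obtain ⟨t, htK, ht⟩ :=
    ((hline.eventually_mem (mem_interior_iff_mem_nhds.1 hx₀)).and self_mem_nhdsWithin).exists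
  refine ⟨x₀ + t • c, htK, ?_⟩
  simp only [dot_eq_dotProduct, dotProduct_add, dotProduct_smul, smul_eq_mul]
  nlinarith

theorem mem_dualCone_of_forall_le (hK : ∀ x ∈ K, ∀ t : ℝ, 0 ≤ t → t • x ∈ K)
    {α : Fin n → ℝ} {m : ℝ} (h : ∀ x ∈ K, m ≤ dot α x) : α ∈ dualCone K := by
  simp only [dualCone, dot_eq_dotProduct, mem_ofPred_eq] at h ⊢
  intro x hx
  by_contra! hneg
  have hm : m ≤ 0 := by simpa using h _ (hK x hx 0 le_rfl)
  have hscaled := h _ (hK x hx ((m - 1) / (α ⬝ᵥ x)) (div_nonneg_of_nonpos (by linarith) hneg.le))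
  rw [dotProduct_smul, smul_eq_mul, div_mul_cancel₀ _ hneg.ne] at hscaled
  linarith

theorem nonpos_of_forall_le_dot (hK : ∀ x ∈ K, ∀ t : ℝ, 0 ≤ t → t • x ∈ K) (hne : K.Nonempty)
    {α : Fin n → ℝ} {m : ℝ} (h : ∀ x ∈ K, m ≤ dot α x) : m ≤ 0 := by
  obtain ⟨x, hx⟩ := hne
  simpa [dot_eq_dotProduct] using h _ (hK x hx 0 le_rfl)

theorem exists_dualCone_certificate (hKconv : Convex ℝ K)
    (hKcone : ∀ x ∈ K, ∀ t : ℝ, 0 ≤ t → t • x ∈ K) {c x₀ : Fin n → ℝ} {c₀ : ℝ}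
    (hx₀ : x₀ ∈ interior K) (hcx₀ : c₀ ≤ dot c x₀) {μ : Fin n → ℝ} {μ₀ : ℝ}
    (hvalid : ∀ x ∈ K, c₀ ≤ dot c x → μ₀ ≤ dot μ x) :
    ∃ (α : Fin n → ℝ) (β : ℝ), α ∈ dualCone K ∧ 0 ≤ β ∧ μ = α + β • c ∧ μ₀ ≤ β * c₀ := by
  obtain ⟨β, hβ, hlag⟩ : ∃ β : ℝ, 0 ≤ β ∧ ∀ x ∈ K, β * (dot c x - c₀) ≤ dot μ x - μ₀ := by
    by_cases hc : c = 0
    · have hc₀ : c₀ ≤ 0 := by simpa [hc, dot_eq_dotProduct] using hcx₀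
      refine ⟨0, le_rfl, fun x hx => ?_⟩
      have := hvalid x hx (by simpa [hc, dot_eq_dotProduct] using hc₀)
      linarith
    · obtain ⟨x₁, hx₁, hlt⟩ := exists_dot_lt_of_mem_interior hx₀ hc
      have hf : ConvexOn ℝ K (fun x => dot μ x - μ₀) :=
        ((dotProductBilin ℝ ℝ μ).convexOn hKconv).sub (concaveOn_const μ₀ hKconv)
      have hg : ConcaveOn ℝ K (fun x => dot c x - c₀) :=
        ((dotProductBilin ℝ ℝ c).concaveOn hKconv).sub (convexOn_const c₀ hKconv)
      exact hf.exists_lagrange_multiplier hg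
        (fun x hx h => sub_nonneg.2 (hvalid x hx (sub_nonneg.1 h))) hx₁ (by linarith)
  have hbound : ∀ x ∈ K, μ₀ - β * c₀ ≤ dot (μ - β • c) x := fun x hx => by
    have := hlag x hx
    simp only [dot_eq_dotProduct, sub_dotProduct, smul_dotProduct, smul_eq_mul] at this ⊢
    linarith
  have hm := nonpos_of_forall_le_dot hKcone ⟨x₀, interior_subset hx₀⟩ hbound
  exact ⟨μ - β • c, β, mem_dualCone_of_forall_le hKcone hbound, hβ, by abel, by linarith⟩

theorem le_dot_of_certificate {α c μ : Fin n → ℝ} {β c₀ μ₀ : ℝ} (hα : α ∈ dualCone K)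
    (hβ : 0 ≤ β) (hμ : μ = α + β • c) (hμ₀ : μ₀ ≤ β * c₀) {x : Fin n → ℝ} (hx : x ∈ K)
    (hcx : c₀ ≤ dot c x) : μ₀ ≤ dot μ x := by
  have hαx := hα x hx
  simp only [hμ, dot_eq_dotProduct, add_dotProduct, smul_dotProduct, smul_eq_mul] at hαx hcx ⊢
  nlinarith

end ConicFarkas

theorem closure_convexHull_le_dot {n : ℕ} {s : Set (Fin n → ℝ)} {μ : Fin n → ℝ} {μ₀ : ℝ}
    (h : ∀ x ∈ s, μ₀ ≤ dot μ x) : ∀ x ∈ closure (convexHull ℝ s), μ₀ ≤ dot μ x := by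
  have hconv : Convex ℝ {x | μ₀ ≤ dot μ x} :=
    convex_halfSpace_ge (dotProductBilin ℝ ℝ μ).isLinear μ₀
  have hclosed : IsClosed {x | μ₀ ≤ dot μ x} :=
    isClosed_le continuous_const (continuous_const.dotProduct continuous_id)
  exact fun x hx => closure_minimal (convexHull_min h hconv) hclosed hx

theorem stmt_3_general {n : ℕ} (K : Set (Fin n → ℝ))
    (hKconv : Convex ℝ K)
    (hKcone : ∀ x ∈ K, ∀ t : ℝ, 0 ≤ t → t • x ∈ K)
    (c₁ c₂ : Fin n → ℝ) (c₁₀ c₂₀ : ℝ)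
    (C₁ C₂ : Set (Fin n → ℝ))
    (hC₁ : C₁ = {x ∈ K | c₁₀ ≤ dot c₁ x})
    (hC₂ : C₂ = {x ∈ K | c₂₀ ≤ dot c₂ x})
    (hsf₁ : (C₁ ∩ interior K).Nonempty) (hsf₂ : (C₂ ∩ interior K).Nonempty)
    (μ : Fin n → ℝ) (μ₀ : ℝ) :
    (∀ x ∈ closure (convexHull ℝ (C₁ ∪ C₂)), μ₀ ≤ dot μ x) ↔
      ∃ α₁ α₂ : Fin n → ℝ, ∃ β₁ β₂ : ℝ,
        α₁ ∈ dualCone K ∧ α₂ ∈ dualCone K ∧ 0 ≤ β₁ ∧ 0 ≤ β₂ ∧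
        μ = α₁ + β₁ • c₁ ∧ μ = α₂ + β₂ • c₂ ∧
        μ₀ ≤ β₁ * c₁₀ ∧ μ₀ ≤ β₂ * c₂₀ := by
  have hsub : C₁ ∪ C₂ ⊆ closure (convexHull ℝ (C₁ ∪ C₂)) :=
    (subset_convexHull ℝ _).trans subset_closure
  subst hC₁ hC₂
  obtain ⟨x₁, ⟨-, hcx₁⟩, hx₁⟩ := hsf₁
  obtain ⟨x₂, ⟨-, hcx₂⟩, hx₂⟩ := hsf₂
  constructor
  · intro hvalid
    obtain ⟨α₁, β₁, hα₁, hβ₁, hμ₁, hb₁⟩ := exists_dualCone_certificate hKconv hKcone hx₁ hcx₁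
      fun x hx hcx => hvalid x (hsub (Or.inl ⟨hx, hcx⟩))
    obtain ⟨α₂, β₂, hα₂, hβ₂, hμ₂, hb₂⟩ := exists_dualCone_certificate hKconv hKcone hx₂ hcx₂
      fun x hx hcx => hvalid x (hsub (Or.inr ⟨hx, hcx⟩))
    exact ⟨α₁, α₂, β₁, β₂, hα₁, hα₂, hβ₁, hβ₂, hμ₁, hμ₂, hb₁, hb₂⟩
  · rintro ⟨α₁, α₂, β₁, β₂, hα₁, hα₂, hβ₁, hβ₂, hμ₁, hμ₂, hb₁, hb₂⟩
    apply closure_convexHull_le_dot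
    rintro x (⟨hx, hcx⟩ | ⟨hx, hcx⟩)
    · exact le_dot_of_certificate hα₁ hβ₁ hμ₁ hb₁ hx hcx
    · exact le_dot_of_certificate hα₂ hβ₂ hμ₂ hb₂ hx hcx

theorem stmt_3 {n : ℕ} (K : Set (Fin n → ℝ))
    (hKclosed : IsClosed K) (hKconv : Convex ℝ K)
    (hKcone : ∀ x ∈ K, ∀ t : ℝ, 0 ≤ t → t • x ∈ K)
    (hKpointed : ∀ x, x ∈ K → -x ∈ K → x = 0)
    (hKfull : (interior K).Nonempty)
    (c₁ c₂ : Fin n → ℝ) (c₁₀ c₂₀ : ℝ)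
    (hc₁₀ : c₁₀ = 0 ∨ c₁₀ = 1 ∨ c₁₀ = -1)
    (hc₂₀ : c₂₀ = 0 ∨ c₂₀ = 1 ∨ c₂₀ = -1)
    (C₁ C₂ : Set (Fin n → ℝ))
    (hC₁ : C₁ = {x ∈ K | c₁₀ ≤ dot c₁ x})
    (hC₂ : C₂ = {x ∈ K | c₂₀ ≤ dot c₂ x})
    (h12 : ¬ C₁ ⊆ C₂) (h21 : ¬ C₂ ⊆ C₁)
    (hsf₁ : (C₁ ∩ interior K).Nonempty) (hsf₂ : (C₂ ∩ interior K).Nonempty)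
    (μ : Fin n → ℝ) (μ₀ : ℝ) :
    (∀ x ∈ closure (convexHull ℝ (C₁ ∪ C₂)), μ₀ ≤ dot μ x) ↔
      ∃ α₁ α₂ : Fin n → ℝ, ∃ β₁ β₂ : ℝ,
        α₁ ∈ dualCone K ∧ α₂ ∈ dualCone K ∧ 0 ≤ β₁ ∧ 0 ≤ β₂ ∧
        μ = α₁ + β₁ • c₁ ∧ μ = α₂ + β₂ • c₂ ∧
        μ₀ ≤ β₁ * c₁₀ ∧ μ₀ ≤ β₂ * c₂₀ :=
  stmt_3_general K hKconv hKcone c₁ c₂ c₁₀ c₂₀ C₁ C₂ hC₁ hC₂ hsf₁ hsf₂ μ μ₀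
end

section
/- Let β > 0 with βc₁ − c₂ ∈ ∂K₂ⁿ. Then for every x ∈ K₂ⁿ, the inequality 2c₂₀ − (βc₁ + c₂)ᵀx ≤ sqrt( ((βc₁ − c₂)ᵀx)² + N₁(β)(xₙ² − ‖x̃‖₂²) ) is equivalent to the linear inequality βc₁ᵀx ≥ c₂₀ (since N₁(β) = 0 and (βc₁ − c₂)ᵀx ≥ 0 on K₂ⁿ). -/
open Set

noncomputable section

/-- First `n` coordinates of `x ∈ ℝ^{n+1}`. -/
def tl {n : ℕ} (x : Fin (n+1) → ℝ) : Fin n → ℝ := fun i => x i.castSucc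

/-- The second-order cone in `ℝ^{n+1}`. -/
def soc (n : ℕ) : Set (Fin (n+1) → ℝ) :=
  {x | Real.sqrt (∑ i, (tl x i)^2) ≤ x (Fin.last n)}

theorem stmt_7 {n : ℕ} (c₁ c₂ : Fin (n+1) → ℝ) (c₂₀ : ℝ)
    (β : ℝ) (hβ : 0 < β)
    (hbd : Real.sqrt (∑ i, (tl (β • c₁ - c₂) i)^2) = (β • c₁ - c₂) (Fin.last n)) :
    ∀ x ∈ soc n,
      (2 * c₂₀ - dot (β • c₁ + c₂) x ≤
        Real.sqrt ((dot (β • c₁ - c₂) x)^2 +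
          ((∑ i, (tl (β • c₁ - c₂) i)^2) - ((β • c₁ - c₂) (Fin.last n))^2) *
            ((x (Fin.last n))^2 - ∑ i, (tl x i)^2))) ↔
      c₂₀ ≤ β * dot c₁ x := by
  intro x hx
  set d : Fin (n+1) → ℝ := β • c₁ - c₂ with hd
  have hSnn : (0:ℝ) ≤ ∑ i, (tl d i)^2 := Finset.sum_nonneg fun i _ => sq_nonneg _
  have hTnn : (0:ℝ) ≤ ∑ i, (tl x i)^2 := Finset.sum_nonneg fun i _ => sq_nonneg _
  have hS : ∑ i, (tl d i)^2 = (d (Fin.last n))^2 := by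
    rw [← hbd, Real.sq_sqrt hSnn]
  have hx' : Real.sqrt (∑ i, (tl x i)^2) ≤ x (Fin.last n) := hx
  -- dot d x ≥ 0
  have hcs : ∑ i, (-(tl d i)) * tl x i ≤
      Real.sqrt (∑ i, (tl d i)^2) * Real.sqrt (∑ i, (tl x i)^2) := by
    have := Real.sum_mul_le_sqrt_mul_sqrt Finset.univ (fun i => -(tl d i)) (fun i => tl x i)
    simpa using this
  have hdlast : 0 ≤ d (Fin.last n) := hbd ▸ Real.sqrt_nonneg _
  have hdot : 0 ≤ dot d x := by
    have hsplit : dot d x = (∑ i, tl d i * tl x i) + d (Fin.last n) * x (Fin.last n) := by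
      simp [dot, Fin.sum_univ_castSucc, tl]
    have h1 : Real.sqrt (∑ i, (tl d i)^2) * Real.sqrt (∑ i, (tl x i)^2) ≤
        d (Fin.last n) * x (Fin.last n) := by
      rw [hbd]
      exact mul_le_mul_of_nonneg_left hx' hdlast
    have h2 : -(∑ i, tl d i * tl x i) ≤ d (Fin.last n) * x (Fin.last n) := by
      calc -(∑ i, tl d i * tl x i) = ∑ i, (-(tl d i)) * tl x i := by
            simp [Finset.sum_neg_distrib, neg_mul]
        _ ≤ _ := hcs.trans h1
    linarith [hsplit]
  have hsqrt : Real.sqrt ((dot d x)^2 +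
      ((∑ i, (tl d i)^2) - (d (Fin.last n))^2) * ((x (Fin.last n))^2 - ∑ i, (tl x i)^2))
      = dot d x := by
    rw [hS]
    simp [Real.sqrt_sq_eq_abs, abs_of_nonneg hdot]
  rw [hsqrt]
  have hsum : dot (β • c₁ + c₂) x + dot d x = 2 * (β * dot c₁ x) := by
    simp only [dot, hd, Pi.add_apply, Pi.sub_apply, Pi.smul_apply, smul_eq_mul,
      ← Finset.sum_add_distrib, Finset.mul_sum]
    refine Finset.sum_congr rfl fun i _ => by ring
  constructor
  · intro h; linarith
  · intro h; linarith
end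
end

section
/- Let β > 0 with βc₁ − c₂ ∉ ±K₂ⁿ and set N₁(β) := ‖βc̃₁ − c̃₂‖₂² − (βc₁ₙ − c₂ₙ)² (> 0). Let x ∈ K₂ⁿ satisfy −2c₂₀ + (βc₁ + c₂)ᵀx ≤ sqrt( ((βc₁ − c₂)ᵀx)² + N₁(β)(xₙ² − ‖x̃‖₂²) ). Then x satisfies 2c₂₀ − (βc₁ + c₂)ᵀx ≤ sqrt( ((βc₁ − c₂)ᵀx)² + N₁(β)(xₙ² − ‖x̃‖₂²) ) if and only if N₁(β)·x + 2(c₂ᵀx − c₂₀)·(βc̃₁ − c̃₂, −βc₁ₙ + c₂ₙ) ∈ K₂ⁿ. -/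
open Set

noncomputable section

set_option maxHeartbeats 1000000 in
/-- Scalar core of the argument. -/
lemma stmt8_aux (N₁ t pt dn xn X a Y : ℝ)
    (hNpos : 0 < N₁) (hN : N₁ = a - dn^2)
    (hX0 : 0 ≤ X) (hY0 : 0 ≤ Y)
    (hYdef : Y = N₁^2*X + 2*N₁*t*pt + t^2*a)
    (hxn : Real.sqrt X ≤ xn)
    (hCS : (N₁ * X + t * pt)^2 ≤ X * Y)
    (hsym : pt + dn * xn + t ≤ Real.sqrt ((pt + dn * xn)^2 + N₁*(xn^2 - X))) :
    (-(pt + dn * xn + t) ≤ Real.sqrt ((pt + dn * xn)^2 + N₁*(xn^2 - X)) ↔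
      Real.sqrt Y ≤ N₁ * xn - t * dn) := by
  have hxn0 : 0 ≤ xn := le_trans (Real.sqrt_nonneg X) hxn
  have hq : X ≤ xn^2 := by nlinarith [Real.sq_sqrt hX0, Real.sqrt_nonneg X]
  have hE0 : 0 ≤ (pt + dn * xn)^2 + N₁*(xn^2 - X) := by
    nlinarith [sq_nonneg (pt + dn * xn), mul_nonneg hNpos.le (by linarith : (0:ℝ) ≤ xn^2 - X)]
  have hR2 : Real.sqrt ((pt + dn * xn)^2 + N₁*(xn^2 - X)) ^ 2
      = (pt + dn * xn)^2 + N₁*(xn^2 - X) := Real.sq_sqrt hE0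
  have hR0 : 0 ≤ Real.sqrt ((pt + dn * xn)^2 + N₁*(xn^2 - X)) := Real.sqrt_nonneg _
  set R := Real.sqrt ((pt + dn * xn)^2 + N₁*(xn^2 - X)) with hRdef
  have hkey : (N₁ * xn - t * dn)^2 - Y
      = N₁ * (((pt + dn * xn)^2 + N₁*(xn^2 - X)) - (pt + dn * xn + t)^2) := by
    rw [hYdef, hN]; ring
  constructor
  · intro h
    have hA2 : (pt + dn * xn + t)^2 ≤ R^2 := sq_le_sq' (by linarith) hsym
    have hEA : 0 ≤ ((pt + dn * xn)^2 + N₁*(xn^2 - X)) - (pt + dn * xn + t)^2 := by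
      nlinarith [hA2, hR2]
    have hYle : Y ≤ (N₁ * xn - t * dn)^2 := by
      nlinarith [hkey, mul_nonneg hNpos.le hEA]
    have hyn0 : 0 ≤ N₁ * xn - t * dn := by
      by_contra hc
      push_neg at hc
      have hsY : Real.sqrt Y ≤ -(N₁ * xn - t * dn) := by
        have h1 := Real.sqrt_le_sqrt hYle
        rwa [Real.sqrt_sq_eq_abs, abs_of_neg hc] at h1
      have hsX2 : Real.sqrt X ^ 2 = X := Real.sq_sqrt hX0
      have hsY2 : Real.sqrt Y ^ 2 = Y := Real.sq_sqrt hY0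
      have habs : -(Real.sqrt X * Real.sqrt Y) ≤ N₁ * X + t * pt := by
        have h2 : Real.sqrt ((N₁ * X + t * pt)^2)
            ≤ Real.sqrt ((Real.sqrt X * Real.sqrt Y)^2) := by
          apply Real.sqrt_le_sqrt
          rw [mul_pow, hsX2, hsY2]; exact hCS
        rw [Real.sqrt_sq_eq_abs, Real.sqrt_sq_eq_abs,
          abs_of_nonneg (mul_nonneg (Real.sqrt_nonneg _) (Real.sqrt_nonneg _))] at h2
        linarith [neg_abs_le (N₁ * X + t * pt)]
      have huv : Real.sqrt X * Real.sqrt Y ≤ xn * -(N₁ * xn - t * dn) :=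
        mul_le_mul hxn hsY (Real.sqrt_nonneg _) hxn0
      have hpair : N₁*(xn^2 - X) ≤ t*(pt + dn * xn) := by nlinarith [habs, huv]
      have ht2 : t^2 ≤ 0 := by
        nlinarith [hpair, hA2, hR2,
          mul_nonneg hNpos.le (by linarith : (0:ℝ) ≤ xn^2 - X)]
      have ht : t = 0 := by
        have h3 : t^2 = 0 := le_antisymm ht2 (sq_nonneg t)
        exact (pow_eq_zero_iff two_ne_zero).mp h3
      rw [ht] at hc
      nlinarith [mul_nonneg hNpos.le hxn0]
    calc Real.sqrt Y ≤ Real.sqrt ((N₁ * xn - t * dn)^2) := Real.sqrt_le_sqrt hYle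
      _ = |N₁ * xn - t * dn| := Real.sqrt_sq_eq_abs _
      _ = N₁ * xn - t * dn := abs_of_nonneg hyn0
  · intro h
    have hYle : Y ≤ (N₁ * xn - t * dn)^2 := by
      nlinarith [Real.sq_sqrt hY0, Real.sqrt_nonneg Y, h]
    have h4 : 0 ≤ N₁ * (((pt + dn * xn)^2 + N₁*(xn^2 - X)) - (pt + dn * xn + t)^2) := by
      linarith [hkey, hYle]
    have hEA : 0 ≤ ((pt + dn * xn)^2 + N₁*(xn^2 - X)) - (pt + dn * xn + t)^2 := by
      nlinarith [h4, hNpos]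
    nlinarith [hR2, hR0, hEA, sq_nonneg (R + (pt + dn * xn + t))]

set_option maxHeartbeats 1000000 in
theorem stmt_8 {n : ℕ} (c₁ c₂ : Fin (n+1) → ℝ) (c₂₀ : ℝ)
    (β : ℝ) (hβ : 0 < β)
    (hout : β • c₁ - c₂ ∉ soc n ∧ -(β • c₁ - c₂) ∉ soc n)
    (N₁ : ℝ)
    (hN₁ : N₁ = (∑ i, (tl (β • c₁ - c₂) i)^2) - ((β • c₁ - c₂) (Fin.last n))^2)
    (x : Fin (n+1) → ℝ) (hx : x ∈ soc n)
    (hsym : -(2 * c₂₀) + dot (β • c₁ + c₂) x ≤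
      Real.sqrt ((dot (β • c₁ - c₂) x)^2 +
        N₁ * ((x (Fin.last n))^2 - ∑ i, (tl x i)^2))) :
    (2 * c₂₀ - dot (β • c₁ + c₂) x ≤
      Real.sqrt ((dot (β • c₁ - c₂) x)^2 +
        N₁ * ((x (Fin.last n))^2 - ∑ i, (tl x i)^2))) ↔
    N₁ • x + (2 * (dot c₂ x - c₂₀)) •
      (Fin.snoc (tl (β • c₁ - c₂)) (-((β • c₁ - c₂) (Fin.last n))) : Fin (n+1) → ℝ)
      ∈ soc n := by
  have hX0 : (0:ℝ) ≤ ∑ i, (tl x i)^2 := Finset.sum_nonneg fun i _ => sq_nonneg _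
  have ha0 : (0:ℝ) ≤ ∑ i, (tl (β • c₁ - c₂) i)^2 :=
    Finset.sum_nonneg fun i _ => sq_nonneg _
  -- N₁ > 0
  have h1' : (β • c₁ - c₂) (Fin.last n) < Real.sqrt (∑ i, (tl (β • c₁ - c₂) i)^2) := by
    have h := hout.1
    simp only [soc, Set.mem_setOf_eq, not_le] at h
    exact h
  have h2' : -((β • c₁ - c₂) (Fin.last n)) < Real.sqrt (∑ i, (tl (β • c₁ - c₂) i)^2) := by
    have h := hout.2
    have e : ∀ i : Fin n, (tl (-(β • c₁ - c₂)) i)^2 = (tl (β • c₁ - c₂) i)^2 := by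
      intro i; simp [tl]; ring
    simp only [soc, Set.mem_setOf_eq, not_le, e, Pi.neg_apply] at h
    exact h
  have hNpos : 0 < N₁ := by
    rw [hN₁]
    nlinarith [h1', h2', Real.sq_sqrt ha0,
      Real.sqrt_nonneg (∑ i, (tl (β • c₁ - c₂) i)^2)]
  -- dot product decompositions
  have hdot : dot (β • c₁ + c₂) x = dot (β • c₁ - c₂) x + 2 * dot c₂ x := by
    simp only [dot, Pi.add_apply, Pi.sub_apply, Pi.smul_apply, smul_eq_mul, Finset.mul_sum]
    rw [← Finset.sum_add_distrib]
    exact Finset.sum_congr rfl fun i _ => by ring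
  have hsplit : dot (β • c₁ - c₂) x
      = (∑ i, tl (β • c₁ - c₂) i * tl x i)
        + (β • c₁ - c₂) (Fin.last n) * x (Fin.last n) := by
    rw [dot, Fin.sum_univ_castSucc]
    rfl
  -- the candidate point
  set y : Fin (n+1) → ℝ := N₁ • x + (2 * (dot c₂ x - c₂₀)) •
      (Fin.snoc (tl (β • c₁ - c₂)) (-((β • c₁ - c₂) (Fin.last n))) : Fin (n+1) → ℝ)
    with hy
  have hcomp : ∀ i : Fin n, tl y i
      = N₁ * tl x i + (2 * (dot c₂ x - c₂₀)) * tl (β • c₁ - c₂) i := by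
    intro i
    simp [hy, tl, Fin.snoc_castSucc]
  have hlast : y (Fin.last n)
      = N₁ * x (Fin.last n)
        - (2 * (dot c₂ x - c₂₀)) * (β • c₁ - c₂) (Fin.last n) := by
    simp [hy, Fin.snoc_last]
    ring
  have expand : ∀ b c : ℝ, (N₁ * b + (2 * (dot c₂ x - c₂₀)) * c)^2
      = N₁^2 * b^2 + 2*N₁*(2 * (dot c₂ x - c₂₀)) * (c * b)
        + (2 * (dot c₂ x - c₂₀))^2 * c^2 := by intros; ring
  have hY_eq : (∑ i, (tl y i)^2)
      = N₁^2 * (∑ i, (tl x i)^2)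
        + 2*N₁*(2 * (dot c₂ x - c₂₀)) * (∑ i, tl (β • c₁ - c₂) i * tl x i)
        + (2 * (dot c₂ x - c₂₀))^2 * (∑ i, (tl (β • c₁ - c₂) i)^2) := by
    simp only [hcomp, expand]
    rw [Finset.sum_add_distrib, Finset.sum_add_distrib,
      ← Finset.mul_sum, ← Finset.mul_sum, ← Finset.mul_sum]
  have expand2 : ∀ b c : ℝ, b * (N₁ * b + (2 * (dot c₂ x - c₂₀)) * c)
      = N₁ * b^2 + (2 * (dot c₂ x - c₂₀)) * (c * b) := by intros; ring
  have hS_eq : (∑ i, tl x i * tl y i)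
      = N₁ * (∑ i, (tl x i)^2)
        + (2 * (dot c₂ x - c₂₀)) * (∑ i, tl (β • c₁ - c₂) i * tl x i) := by
    simp only [hcomp, expand2]
    rw [Finset.sum_add_distrib, ← Finset.mul_sum, ← Finset.mul_sum]
  have hY0 : (0:ℝ) ≤ ∑ i, (tl y i)^2 := Finset.sum_nonneg fun i _ => sq_nonneg _
  have hCS0 := Finset.sum_mul_sq_le_sq_mul_sq Finset.univ (tl x) (tl y)
  rw [hS_eq] at hCS0
  -- massage hsym
  rw [hsplit] at hsym
  have e2 : -(2 * c₂₀) + dot (β • c₁ + c₂) x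
      = (∑ i, tl (β • c₁ - c₂) i * tl x i)
        + (β • c₁ - c₂) (Fin.last n) * x (Fin.last n) + 2 * (dot c₂ x - c₂₀) := by
    rw [hdot, hsplit]; ring
  rw [e2] at hsym
  have main := stmt8_aux N₁ (2 * (dot c₂ x - c₂₀))
    (∑ i, tl (β • c₁ - c₂) i * tl x i)
    ((β • c₁ - c₂) (Fin.last n)) (x (Fin.last n))
    (∑ i, (tl x i)^2) (∑ i, (tl (β • c₁ - c₂) i)^2) (∑ i, (tl y i)^2)
    hNpos hN₁ hX0 hY0 hY_eq hx hCS0 hsym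
  rw [show 2 * c₂₀ - dot (β • c₁ + c₂) x
      = -((∑ i, tl (β • c₁ - c₂) i * tl x i)
          + (β • c₁ - c₂) (Fin.last n) * x (Fin.last n) + 2 * (dot c₂ x - c₂₀)) from by
    rw [hdot, hsplit]; ring]
  rw [hsplit]
  simp only [soc, Set.mem_setOf_eq]
  rw [hlast]
  exact main
end
end

section
/- Let u ∈ K₂ⁿ and β > 0 with βc₁ − c₂ ∉ ±K₂ⁿ, and define A(u) := ‖N₁(β)ũ + 2(c₂ᵀu − c₂₀)(βc̃₁ − c̃₂)‖₂ and B(u) := N₁(β)uₙ − 2(c₂ᵀu − c₂₀)(βc₁ₙ − c₂ₙ), with N₁(β) := ‖βc̃₁ − c̃₂‖₂² − (βc₁ₙ − c₂ₙ)². Then either A(u) + B(u) > 0 or A(u) = B(u) = 0; consequently A(u)² ≤ B(u)² if and only if A(u) ≤ B(u). -/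
open Set

noncomputable section

set_option maxHeartbeats 2000000 in
theorem stmt_9 {n : ℕ} (c₁ c₂ : Fin (n+1) → ℝ) (c₂₀ : ℝ)
    (β : ℝ) (hβ : 0 < β)
    (hout : β • c₁ - c₂ ∉ soc n ∧ -(β • c₁ - c₂) ∉ soc n)
    (N₁ : ℝ)
    (hN₁ : N₁ = (∑ i, (tl (β • c₁ - c₂) i)^2) - ((β • c₁ - c₂) (Fin.last n))^2)
    (u : Fin (n+1) → ℝ) (hu : u ∈ soc n)
    (A B : ℝ)
    (hA : A = Real.sqrt (∑ i,
      (N₁ * tl u i + 2 * (dot c₂ u - c₂₀) * tl (β • c₁ - c₂) i)^2))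
    (hB : B = N₁ * u (Fin.last n) -
      2 * (dot c₂ u - c₂₀) * ((β • c₁ - c₂) (Fin.last n))) :
    (0 < A + B ∨ (A = 0 ∧ B = 0)) ∧ (A^2 ≤ B^2 ↔ A ≤ B) := by
  set d : Fin (n+1) → ℝ := β • c₁ - c₂ with hddef
  set t : ℝ := 2 * (dot c₂ u - c₂₀) with htdef
  set Sd : ℝ := ∑ i, (tl d i)^2 with hSddef
  set Su : ℝ := ∑ i, (tl u i)^2 with hSudef
  set P : ℝ := ∑ i, tl u i * tl d i with hPdef
  have hSd0 : 0 ≤ Sd := Finset.sum_nonneg fun i _ => sq_nonneg _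
  have hSu0 : 0 ≤ Su := Finset.sum_nonneg fun i _ => sq_nonneg _
  set sd : ℝ := Real.sqrt Sd with hsddef
  set su : ℝ := Real.sqrt Su with hsudef
  have hsd0 : 0 ≤ sd := Real.sqrt_nonneg _
  have hsu0 : 0 ≤ su := Real.sqrt_nonneg _
  have hsd2 : sd ^ 2 = Sd := Real.sq_sqrt hSd0
  have hsu2 : su ^ 2 = Su := Real.sq_sqrt hSu0
  -- from hout : |d (last)| < sd
  have h1 : d (Fin.last n) < sd := by
    have := hout.1
    simp only [soc, Set.mem_setOf_eq, not_le] at this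
    exact this
  have h2 : -(d (Fin.last n)) < sd := by
    have := hout.2
    simp only [soc, Set.mem_setOf_eq, not_le] at this
    have heq : (∑ i, (tl (-d) i)^2) = Sd := by
      apply Finset.sum_congr rfl
      intro i _
      simp [tl]
    rw [heq] at this
    simpa using this
  have habsd : |d (Fin.last n)| < sd := abs_lt.2 ⟨by linarith, h1⟩
  -- N₁ > 0
  have hN1pos : 0 < N₁ := by
    rw [hN₁]
    have : (d (Fin.last n))^2 < sd^2 := by
      rw [← sq_abs]
      exact pow_lt_pow_left₀ habsd (abs_nonneg _) (by norm_num)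
    rw [hsd2] at this
    linarith
  -- u in cone
  have hun : su ≤ u (Fin.last n) := hu
  have hun0 : 0 ≤ u (Fin.last n) := le_trans hsu0 hun
  -- A ≥ 0 and A² = sum
  have hA0 : 0 ≤ A := hA ▸ Real.sqrt_nonneg _
  have hSA0 : 0 ≤ ∑ i, (N₁ * tl u i + t * tl d i)^2 :=
    Finset.sum_nonneg fun i _ => sq_nonneg _
  have hA2 : A ^ 2 = ∑ i, (N₁ * tl u i + t * tl d i)^2 := by
    rw [hA, Real.sq_sqrt hSA0]
  have hexp : (∑ i, (N₁ * tl u i + t * tl d i)^2)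
      = N₁^2 * Su + 2 * N₁ * t * P + t^2 * Sd := by
    rw [hSudef, hSddef, hPdef, Finset.mul_sum, Finset.mul_sum, Finset.mul_sum,
      ← Finset.sum_add_distrib, ← Finset.sum_add_distrib]
    apply Finset.sum_congr rfl
    intro i _
    ring
  -- Cauchy-Schwarz : |P| ≤ su * sd
  have hCS : P ^ 2 ≤ Su * Sd := Finset.sum_mul_sq_le_sq_mul_sq _ _ _
  have habsP : |P| ≤ su * sd := by
    have h3 : Real.sqrt (P^2) ≤ Real.sqrt (Su * Sd) := Real.sqrt_le_sqrt hCS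
    rwa [Real.sqrt_sq_eq_abs, Real.sqrt_mul hSu0, ← hsudef, ← hsddef] at h3
  have htP : -(|t| * (su * sd)) ≤ t * P := by
    have h4 : |t * P| ≤ |t| * (su * sd) := by
      rw [abs_mul]
      exact mul_le_mul_of_nonneg_left habsP (abs_nonneg t)
    linarith [neg_abs_le (t * P)]
  -- key lower bound on A
  have hkey : |t| * sd - N₁ * su ≤ A := by
    have hx : (|t| * sd - N₁ * su)^2 ≤ A^2 := by
      have hterm : 0 ≤ 2 * N₁ * (t * P + |t| * (su * sd)) :=
        mul_nonneg (by linarith) (by linarith)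
      have hsq : (|t| * sd - N₁ * su)^2
          = t^2 * sd^2 - 2 * N₁ * (|t| * (su * sd)) + N₁^2 * su^2 := by
        rw [sub_sq, mul_pow, sq_abs]; ring
      rw [hA2, hexp, ← hsu2, ← hsd2, hsq]
      nlinarith [hterm]
    calc |t| * sd - N₁ * su ≤ |(|t| * sd - N₁ * su)| := le_abs_self _
      _ = Real.sqrt ((|t| * sd - N₁ * su)^2) := (Real.sqrt_sq_eq_abs _).symm
      _ ≤ Real.sqrt (A^2) := Real.sqrt_le_sqrt hx
      _ = A := Real.sqrt_sq hA0
  -- bound on -B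
  have hBd : -B ≤ |t| * sd - N₁ * su := by
    rw [hB]
    have h5 : t * d (Fin.last n) ≤ |t| * sd := by
      calc t * d (Fin.last n) ≤ |t * d (Fin.last n)| := le_abs_self _
        _ = |t| * |d (Fin.last n)| := abs_mul _ _
        _ ≤ |t| * sd := mul_le_mul_of_nonneg_left habsd.le (abs_nonneg t)
    have h6 : N₁ * su ≤ N₁ * u (Fin.last n) :=
      mul_le_mul_of_nonneg_left hun hN1pos.le
    linarith
  have hAB0 : 0 ≤ A + B := by linarith
  have hmain : 0 < A + B ∨ (A = 0 ∧ B = 0) := by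
    rcases eq_or_ne t 0 with ht0 | ht0
    · -- t = 0
      rcases lt_or_eq_of_le hun0 with hpos | hzero
      · left
        have hBpos : 0 < B := by
          rw [hB, ht0]
          nlinarith [hN1pos, hpos]
        linarith
      · right
        have hsuz : su = 0 := le_antisymm (hzero ▸ hun) hsu0
        have hSuz : Su = 0 := by rw [← hsu2, hsuz]; ring
        have htlz : ∀ i, tl u i = 0 := by
          intro i
          have := (Finset.sum_eq_zero_iff_of_nonneg
            (fun i _ => sq_nonneg (tl u i))).1 hSuz i (Finset.mem_univ i)
          exact pow_eq_zero_iff (by norm_num) |>.1 this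
        constructor
        · rw [hA]
          have : (∑ i, (N₁ * tl u i + t * tl d i)^2) = 0 := by
            apply Finset.sum_eq_zero
            intro i _
            rw [htlz i, ht0]
            ring
          rw [this, Real.sqrt_zero]
        · rw [hB, ht0, ← hzero]
          ring
    · -- t ≠ 0
      left
      have h7 : t * d (Fin.last n) < |t| * sd := by
        calc t * d (Fin.last n) ≤ |t| * |d (Fin.last n)| := by
              rw [← abs_mul]; exact le_abs_self _
          _ < |t| * sd := by
              exact mul_lt_mul_of_pos_left habsd (abs_pos.2 ht0)
      have h6 : N₁ * su ≤ N₁ * u (Fin.last n) :=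
        mul_le_mul_of_nonneg_left hun hN1pos.le
      have : -B < |t| * sd - N₁ * su := by rw [hB]; linarith
      linarith [hkey]
  refine ⟨hmain, ?_⟩
  rcases hmain with hpos | ⟨hA0', hB0'⟩
  · constructor
    · intro h
      by_contra hlt
      push_neg at hlt
      nlinarith [mul_pos (sub_pos.2 hlt) hpos]
    · intro h
      nlinarith [mul_self_le_mul_self hA0 h]
  · simp [hA0', hB0']
end
end

section
/- Let C₁, C₂ satisfy the second-order cone disjunctive setup and let β > 0 satisfy βc₁₀ ≥ c₂₀ and βc₁ − c₂ ∉ ±K₂ⁿ. If {x ∈ K₂ⁿ : βc₁ᵀx > c₂₀ and c₂ᵀx > c₂₀} = ∅, then for every x ∈ K₂ⁿ, the inequality −2c₂₀ + (βc₁ + c₂)ᵀx ≤ sqrt( ((βc₁ − c₂)ᵀx)² + N₁(β)(xₙ² − ‖x̃‖₂²) ) holds. -/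
open Set

noncomputable section

theorem stmt_10 {n : ℕ}
    (c₁ c₂ : Fin (n+1) → ℝ) (c₁₀ c₂₀ : ℝ)
    (hc₁₀ : c₁₀ = 0 ∨ c₁₀ = 1 ∨ c₁₀ = -1)
    (hc₂₀ : c₂₀ = 0 ∨ c₂₀ = 1 ∨ c₂₀ = -1)
    (hord : c₂₀ ≤ c₁₀)
    (C₁ C₂ : Set (Fin (n+1) → ℝ))
    (hC₁ : C₁ = {x ∈ soc n | c₁₀ ≤ dot c₁ x})
    (hC₂ : C₂ = {x ∈ soc n | c₂₀ ≤ dot c₂ x})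
    (h12 : ¬ C₁ ⊆ C₂) (h21 : ¬ C₂ ⊆ C₁)
    (hsf₁ : (C₁ ∩ interior (soc n)).Nonempty)
    (hsf₂ : (C₂ ∩ interior (soc n)).Nonempty)
    (β : ℝ) (hβ : 0 < β) (hβc : c₂₀ ≤ β * c₁₀)
    (hout : β • c₁ - c₂ ∉ soc n ∧ -(β • c₁ - c₂) ∉ soc n)
    (hempty : {x ∈ soc n | c₂₀ < β * dot c₁ x ∧ c₂₀ < dot c₂ x} = ∅) :
    ∀ x ∈ soc n,
      -(2 * c₂₀) + dot (β • c₁ + c₂) x ≤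
        Real.sqrt ((dot (β • c₁ - c₂) x)^2 +
          ((∑ i, (tl (β • c₁ - c₂) i)^2) - ((β • c₁ - c₂) (Fin.last n))^2) *
            ((x (Fin.last n))^2 - ∑ i, (tl x i)^2)) := by
  intro x hx
  set d := β • c₁ - c₂ with hd
  -- linearity of dot
  have hdotd : dot d x = β * dot c₁ x - dot c₂ x := by
    simp only [dot, hd, Pi.sub_apply, Pi.smul_apply, smul_eq_mul, sub_mul, mul_assoc,
      Finset.sum_sub_distrib, Finset.mul_sum]
  have hdots : dot (β • c₁ + c₂) x = β * dot c₁ x + dot c₂ x := by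
    simp only [dot, Pi.add_apply, Pi.smul_apply, smul_eq_mul, add_mul, mul_assoc,
      Finset.sum_add_distrib, Finset.mul_sum]
  -- N > 0
  have hS : (0:ℝ) ≤ ∑ i, (tl d i)^2 := Finset.sum_nonneg fun i _ => sq_nonneg _
  have h1 : d (Fin.last n) < Real.sqrt (∑ i, (tl d i)^2) := by
    have := hout.1; simp only [soc, Set.mem_setOf_eq, not_le] at this; exact this
  have h2 : -(d (Fin.last n)) < Real.sqrt (∑ i, (tl d i)^2) := by
    have := hout.2
    simp only [soc, Set.mem_setOf_eq, not_le, Pi.neg_apply] at this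
    have heq : ∑ i, (tl (-d) i)^2 = ∑ i, (tl d i)^2 := by
      apply Finset.sum_congr rfl; intro i _; simp [tl]
    rw [heq] at this; exact this
  have hN : (d (Fin.last n))^2 < ∑ i, (tl d i)^2 := by
    have habs : |d (Fin.last n)| < Real.sqrt (∑ i, (tl d i)^2) := abs_lt.2 ⟨by linarith, h1⟩
    calc (d (Fin.last n))^2 = |d (Fin.last n)|^2 := (sq_abs _).symm
      _ < (Real.sqrt (∑ i, (tl d i)^2))^2 := by
          apply sq_lt_sq' <;> nlinarith [abs_nonneg (d (Fin.last n))]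
      _ = ∑ i, (tl d i)^2 := Real.sq_sqrt hS
  -- σ ≥ 0
  have hSx : (0:ℝ) ≤ ∑ i, (tl x i)^2 := Finset.sum_nonneg fun i _ => sq_nonneg _
  have hxn : Real.sqrt (∑ i, (tl x i)^2) ≤ x (Fin.last n) := hx
  have hxn0 : 0 ≤ x (Fin.last n) := le_trans (Real.sqrt_nonneg _) hxn
  have hσ : (0:ℝ) ≤ (x (Fin.last n))^2 - ∑ i, (tl x i)^2 := by
    have := Real.sq_sqrt hSx
    nlinarith [Real.sqrt_nonneg (∑ i, (tl x i)^2)]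
  -- from hempty
  have hcase : β * dot c₁ x ≤ c₂₀ ∨ dot c₂ x ≤ c₂₀ := by
    by_contra h
    push_neg at h
    have : x ∈ ({y ∈ soc n | c₂₀ < β * dot c₁ y ∧ c₂₀ < dot c₂ y} : Set _) :=
      ⟨hx, h.1, h.2⟩
    rw [hempty] at this
    exact this
  -- LHS ≤ |dot d x|
  have hLHS : -(2 * c₂₀) + dot (β • c₁ + c₂) x ≤ |dot d x| := by
    rw [hdots]
    rcases hcase with h | h
    · rcases le_or_gt (dot c₂ x) c₂₀ with h' | h'
      · calc -(2 * c₂₀) + (β * dot c₁ x + dot c₂ x) ≤ 0 := by linarith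
          _ ≤ |dot d x| := abs_nonneg _
      · have : -(2 * c₂₀) + (β * dot c₁ x + dot c₂ x) ≤ -(dot d x) := by
          rw [hdotd]; linarith
        exact this.trans (neg_le_abs _)
    · rcases le_or_gt (β * dot c₁ x) c₂₀ with h' | h'
      · calc -(2 * c₂₀) + (β * dot c₁ x + dot c₂ x) ≤ 0 := by linarith
          _ ≤ |dot d x| := abs_nonneg _
      · have : -(2 * c₂₀) + (β * dot c₁ x + dot c₂ x) ≤ dot d x := by
          rw [hdotd]; linarith
        exact this.trans (le_abs_self _)
  refine hLHS.trans ?_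
  have : |dot d x| = Real.sqrt ((dot d x)^2) := (Real.sqrt_sq_eq_abs _).symm
  rw [this]
  apply Real.sqrt_le_sqrt
  nlinarith [mul_nonneg (le_of_lt (by linarith : (0:ℝ) < ∑ i, (tl d i)^2 - (d (Fin.last n))^2)) hσ]
end
end

section
/- Let K ⊆ ℝⁿ be a regular cone and let C₁, C₂ satisfy the basic disjunctive setup. If c₁ ∈ K* or c₂ ∈ K* and c₂₀ ≤ 0, then the closed convex hull of C₁ ∪ C₂ equals K. -/
open Set

lemma dot_smul' {n : ℕ} (c x : Fin n → ℝ) (s : ℝ) : dot c (s • x) = s * dot c x := by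
  simp [dot, Finset.mul_sum, mul_left_comm]

lemma dot_add' {n : ℕ} (c x y : Fin n → ℝ) : dot c (x + y) = dot c x + dot c y := by
  simp [dot, mul_add, Finset.sum_add_distrib]

theorem stmt_12 {n : ℕ} (K : Set (Fin n → ℝ))
    (hKclosed : IsClosed K) (hKconv : Convex ℝ K)
    (hKcone : ∀ x ∈ K, ∀ t : ℝ, 0 ≤ t → t • x ∈ K)
    (hKpointed : ∀ x, x ∈ K → -x ∈ K → x = 0)
    (hKfull : (interior K).Nonempty)
    (c₁ c₂ : Fin n → ℝ) (c₁₀ c₂₀ : ℝ)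
    (hc₁₀ : c₁₀ = 0 ∨ c₁₀ = 1 ∨ c₁₀ = -1)
    (hc₂₀ : c₂₀ = 0 ∨ c₂₀ = 1 ∨ c₂₀ = -1)
    (hord : c₂₀ ≤ c₁₀)
    (C₁ C₂ : Set (Fin n → ℝ))
    (hC₁ : C₁ = {x ∈ K | c₁₀ ≤ dot c₁ x})
    (hC₂ : C₂ = {x ∈ K | c₂₀ ≤ dot c₂ x})
    (h12 : ¬ C₁ ⊆ C₂) (h21 : ¬ C₂ ⊆ C₁)
    (hsf₁ : (C₁ ∩ interior K).Nonempty)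
    (hsf₂ : (C₂ ∩ interior K).Nonempty)
    (hdual : c₁ ∈ dualCone K ∨ c₂ ∈ dualCone K)
    (hneg : c₂₀ ≤ 0) :
    closure (convexHull ℝ (C₁ ∪ C₂)) = K := by
  obtain ⟨z, hz⟩ := hKfull
  have hzK : z ∈ K := interior_subset hz
  have h0K : (0 : Fin n → ℝ) ∈ K := by simpa using hKcone z hzK 0 le_rfl
  have hC₁K : C₁ ⊆ K := by rw [hC₁]; exact fun x hx => hx.1
  have hC₂K : C₂ ⊆ K := by rw [hC₂]; exact fun x hx => hx.1
  have hsub : closure (convexHull ℝ (C₁ ∪ C₂)) ⊆ K :=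
    closure_minimal (convexHull_min (union_subset hC₁K hC₂K) hKconv) hKclosed
  refine Set.Subset.antisymm hsub ?_
  rcases hdual with hd1 | hd2
  · -- c₁ ∈ K*
    by_cases hc : c₁₀ ≤ 0
    · intro x hx
      exact subset_closure (subset_convexHull ℝ _ (Or.inl (by
        rw [hC₁]; exact ⟨hx, hc.trans (hd1 x hx)⟩)))
    · have hc1 : c₁₀ = 1 := by
        rcases hc₁₀ with h | h | h
        · exact absurd h.le hc
        · exact h
        · exact absurd (by linarith : c₁₀ ≤ 0) hc
      have h0C₂ : (0 : Fin n → ℝ) ∈ C₂ := by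
        rw [hC₂]
        refine ⟨h0K, ?_⟩
        simpa [dot] using hneg
      have haddK : ∀ a ∈ K, ∀ b ∈ K, a + b ∈ K := by
        intro a ha b hb
        have h1 := hKconv ha hb (by norm_num : (0:ℝ) ≤ 1/2) (by norm_num : (0:ℝ) ≤ 1/2)
          (by norm_num)
        have h2 := hKcone _ h1 2 (by norm_num)
        simpa [smul_add, smul_smul, show (2:ℝ) * (1/2) = 1 by norm_num] using h2
      have key : ∀ y ∈ K, 0 < dot c₁ y → y ∈ convexHull ℝ (C₁ ∪ C₂) := by
        intro y hy hdy
        by_cases hge : 1 ≤ dot c₁ y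
        · exact subset_convexHull ℝ _ (Or.inl (by rw [hC₁]; exact ⟨hy, hc1 ▸ hge⟩))
        · set d := dot c₁ y with hd
          have hdlt : d < 1 := not_le.mp hge
          have hyC : d⁻¹ • y ∈ C₁ := by
            rw [hC₁]
            refine ⟨hKcone y hy d⁻¹ (inv_nonneg.mpr hdy.le), ?_⟩
            rw [dot_smul', inv_mul_cancel₀ hdy.ne', hc1]
          have hrep : y = d • (d⁻¹ • y) + (1 - d) • (0 : Fin n → ℝ) := by
            rw [smul_smul, mul_inv_cancel₀ hdy.ne', one_smul, smul_zero, add_zero]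
          rw [hrep]
          exact (convex_convexHull ℝ (C₁ ∪ C₂)) (subset_convexHull ℝ _ (Or.inl hyC))
            (subset_convexHull ℝ _ (Or.inr h0C₂)) hdy.le (by linarith) (by ring)
      intro x hx
      obtain ⟨x₀, hx₀C₁, _⟩ := hsf₁
      have hx₀K : x₀ ∈ K := hC₁K hx₀C₁
      have hx₀d : 1 ≤ dot c₁ x₀ := by
        rw [hC₁] at hx₀C₁; exact hc1 ▸ hx₀C₁.2
      have htend : Filter.Tendsto (fun ε : ℝ => x + ε • x₀)
          (nhdsWithin 0 (Ioi 0)) (nhds x) := by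
        have hcont : Continuous (fun ε : ℝ => x + ε • x₀) := by continuity
        have := hcont.tendsto 0
        simp only [zero_smul, add_zero] at this
        exact this.mono_left nhdsWithin_le_nhds
      refine mem_closure_of_tendsto htend ?_
      filter_upwards [self_mem_nhdsWithin] with ε hε
      have hεpos : (0:ℝ) < ε := hε
      have hmemK : x + ε • x₀ ∈ K := haddK x hx _ (hKcone x₀ hx₀K ε hεpos.le)
      have hdotpos : 0 < dot c₁ (x + ε • x₀) := by
        rw [dot_add', dot_smul']
        have h1 : 0 ≤ dot c₁ x := hd1 x hx
        nlinarith
      exact key _ hmemK hdotpos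
  · -- c₂ ∈ K*
    intro x hx
    exact subset_closure (subset_convexHull ℝ _ (Or.inr (by
      rw [hC₂]; exact ⟨hx, hneg.trans (hd2 x hx)⟩)))
end

section
/- Let K be a regular cone and C₁, C₂ satisfy the basic disjunctive setup with c₁₀ = c₂₀ ∈ {±1}. If μᵀx ≥ μ₀ is an undominated valid linear inequality for clconv(C₁ ∪ C₂) that is tight on both C₁ and C₂ (i.e., inf{μᵀx : x ∈ Cᵢ} = μ₀ for i = 1, 2), with representation μ = α₁ + β₁c₁ = α₂ + β₂c₂, α₁, α₂ ∈ K*, β₁, β₂ > 0, min{β₁c₁₀, β₂c₂₀} = μ₀ = c₂₀, then β₁ = β₂ = 1. -/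
open Set

theorem stmt_13 {n : ℕ} (K : Set (Fin n → ℝ))
    (hKclosed : IsClosed K) (hKconv : Convex ℝ K)
    (hKcone : ∀ x ∈ K, ∀ t : ℝ, 0 ≤ t → t • x ∈ K)
    (hKpointed : ∀ x, x ∈ K → -x ∈ K → x = 0)
    (hKfull : (interior K).Nonempty)
    (c₁ c₂ : Fin n → ℝ) (c₁₀ c₂₀ : ℝ)
    (hc₁₀ : c₁₀ = 0 ∨ c₁₀ = 1 ∨ c₁₀ = -1)
    (hc₂₀ : c₂₀ = 0 ∨ c₂₀ = 1 ∨ c₂₀ = -1)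
    (hord : c₂₀ ≤ c₁₀)
    (C₁ C₂ : Set (Fin n → ℝ))
    (hC₁ : C₁ = {x ∈ K | c₁₀ ≤ dot c₁ x})
    (hC₂ : C₂ = {x ∈ K | c₂₀ ≤ dot c₂ x})
    (h12 : ¬ C₁ ⊆ C₂) (h21 : ¬ C₂ ⊆ C₁)
    (hsf₁ : (C₁ ∩ interior K).Nonempty)
    (hsf₂ : (C₂ ∩ interior K).Nonempty)
    (heq : c₁₀ = c₂₀) (hpm : c₁₀ = 1 ∨ c₁₀ = -1)
    (μ : Fin n → ℝ) (μ₀ : ℝ)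
    (hvalid : ∀ x ∈ closure (convexHull ℝ (C₁ ∪ C₂)), μ₀ ≤ dot μ x)
    (hundom : ¬ ∃ (ν : Fin n → ℝ) (ν₀ : ℝ),
      (∀ x ∈ closure (convexHull ℝ (C₁ ∪ C₂)), ν₀ ≤ dot ν x) ∧
      μ - ν ∈ dualCone K ∧ μ₀ - ν₀ ≤ 0 ∧ ¬ (μ - ν = 0 ∧ μ₀ - ν₀ = 0))
    (htight₁ : sInf ((fun x => dot μ x) '' C₁) = μ₀)
    (htight₂ : sInf ((fun x => dot μ x) '' C₂) = μ₀)
    (α₁ α₂ : Fin n → ℝ) (β₁ β₂ : ℝ)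
    (hα₁ : α₁ ∈ dualCone K) (hα₂ : α₂ ∈ dualCone K)
    (hβ₁ : 0 < β₁) (hβ₂ : 0 < β₂)
    (hrep₁ : μ = α₁ + β₁ • c₁) (hrep₂ : μ = α₂ + β₂ • c₂)
    (hmin : min (β₁ * c₁₀) (β₂ * c₂₀) = μ₀) (hμ₀ : μ₀ = c₂₀) :
    β₁ = 1 ∧ β₂ = 1 := by
  have hdot_add : ∀ (a b x : Fin n → ℝ), dot (a + b) x = dot a x + dot b x := by
    intro a b x
    simp [dot, add_mul, Finset.sum_add_distrib]
  have hdot_smul : ∀ (t : ℝ) (c x : Fin n → ℝ), dot (t • c) x = t * dot c x := by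
    intro t c x
    simp [dot, Finset.mul_sum, mul_assoc]
  -- lower bound on dot μ x over Cᵢ
  have key : ∀ (C : Set (Fin n → ℝ)) (c : Fin n → ℝ) (c₀ : ℝ) (α : Fin n → ℝ) (β : ℝ),
      C = {x ∈ K | c₀ ≤ dot c x} → α ∈ dualCone K → 0 < β → μ = α + β • c →
      (C ∩ interior K).Nonempty → sInf ((fun x => dot μ x) '' C) = μ₀ →
      β * c₀ ≤ μ₀ := by
    intro C c c₀ α β hC hα hβ hrep hsf htight
    rw [← htight]
    apply le_csInf
    · obtain ⟨x, hx, -⟩ := hsf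
      exact ⟨dot μ x, ⟨x, hx, rfl⟩⟩
    · rintro b ⟨x, hx, rfl⟩
      rw [hC] at hx
      obtain ⟨hxK, hxc⟩ := hx
      have h1 : 0 ≤ dot α x := hα x hxK
      have h2 : β * c₀ ≤ β * dot c x := mul_le_mul_of_nonneg_left hxc hβ.le
      have h3 : dot μ x = dot α x + β * dot c x := by rw [hrep, hdot_add, hdot_smul]
      linarith
  have h1 : β₁ * c₁₀ ≤ μ₀ := key C₁ c₁ c₁₀ α₁ β₁ hC₁ hα₁ hβ₁ hrep₁ hsf₁ htight₁
  have h2 : β₂ * c₂₀ ≤ μ₀ := key C₂ c₂ c₂₀ α₂ β₂ hC₂ hα₂ hβ₂ hrep₂ hsf₂ htight₂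
  have h1' : μ₀ ≤ β₁ * c₁₀ := hmin ▸ min_le_left _ _
  have h2' : μ₀ ≤ β₂ * c₂₀ := hmin ▸ min_le_right _ _
  have e1 : β₁ * c₁₀ = c₁₀ := by rw [heq] at *; linarith [hμ₀]
  have e2 : β₂ * c₂₀ = c₂₀ := by linarith [hμ₀]
  rcases hpm with h | h
  · constructor
    · have := e1; rw [h] at this; linarith
    · have := e2; rw [← heq, h] at this; linarith
  · constructor
    · have := e1; rw [h] at this; linarith
    · have := e2; rw [← heq, h] at this; linarith
end

section
/- Let K be a regular cone, C₁ = {x ∈ K : c₁ᵀx ≥ c₁₀}, C₂ = {x ∈ K : c₂ᵀx ≥ c₂₀} with c₁₀, c₂₀ ∈ {0,±1}, C₁ ⊄ C₂, C₂ ⊄ C₁, both strictly feasible. Suppose conv(C₁ ∪ C₂) is closed and conv(C₁ ∪ C₂) ≠ K. Then for every u ∈ K \ conv(C₁ ∪ C₂) there exists a valid linear inequality μᵀx ≥ μ₀ for conv(C₁ ∪ C₂) with μᵀu < μ₀ and points x₁ ∈ C₁, x₂ ∈ C₂ with μᵀx₁ = μᵀx₂ = μ₀. -/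
/-!
Since `K` is closed and pointed, compactness of `K ∩ sphere 0 1` gives a functional `e` with
`e x ≥ δ ‖x‖` on `K`; adding `ε e` to a functional bounded below on a closed subset of `K`
makes it coercive there, so that its minimum is attained.

Walk from `u` towards a point `p` in the interior of `conv(C₁ ∪ C₂)` that lies in `C₂` and on the
far side of the hyperplane bounding `C₁`. The first point of the hull on this segment is not in
`C₁`, so a supporting functional `w` there attains its minimum over the hull on `C₂`. Either it is
already tight on `C₁` too, or `w + ε e` (small `ε`) is a coercive functional separating `u` whose
minimum over `C₂` stays strictly below its minimum over `C₁`. The same with `C₁` and `C₂` swapped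
gives a second such functional, and along the segment of functionals between the two the
difference of the minima over `C₁` and over `C₂` changes sign; at a zero it is the sought
inequality.
-/

open Set

open Filter Topology

section

variable {E : Type*} [NormedAddCommGroup E]

lemma eventually_lt_add_mul [ProperSpace E] {S : Set E} (hS : IsClosed S)
    {e : E → ℝ} {δ : ℝ} (hδ : 0 < δ) (he : ∀ x ∈ S, δ * ‖x‖ ≤ e x) {w : E → ℝ}
    (hw : Continuous w) {b : E} (hwb : ∀ x ∈ S, w b < w x) :
    ∀ᶠ ε in 𝓝[>] 0, ∀ x ∈ S, w b + ε * e b < w x + ε * e x := by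
  -- On the compact part of `S` the gap `w x - w b` is bounded below; off it, `e x > e b`.
  have hP : IsCompact (S ∩ Metric.closedBall 0 (e b / δ)) :=
    (isCompact_closedBall 0 _).inter_left hS
  obtain ⟨γ, hγ, hγP⟩ := hP.exists_forall_le' hw.continuousOn fun x hx => hwb x hx.1
  have hsmall : ∀ᶠ ε in 𝓝 (0 : ℝ), ε * e b < γ - w b :=
    (continuous_id.mul continuous_const).continuousAt.eventually_lt continuousAt_const
      (by simpa using hγ)
  filter_upwards [hsmall.filter_mono nhdsWithin_le_nhds, self_mem_nhdsWithin] with ε hεb hε x hx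
  have hε : 0 < ε := hε
  have hex : δ * ‖x‖ ≤ e x := he x hx
  have hex0 : 0 ≤ e x := (mul_nonneg hδ.le (norm_nonneg x)).trans hex
  by_cases hxR : ‖x‖ ≤ e b / δ
  · have := hγP x ⟨hx, mem_closedBall_zero_iff.2 hxR⟩
    nlinarith [mul_nonneg hε.le hex0]
  · rw [not_le, div_lt_iff₀ hδ] at hxR
    nlinarith [hwb x hx]

lemma exists_eq_sInf_isMinOn_of_far [ProperSpace E] {f : E → ℝ} (hf : Continuous f) {s : Set E}
    (hs : IsClosed s) {R : ℝ} {z : E} (hz : z ∈ s) (hzR : ‖z‖ ≤ R)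
    (hfar : ∀ x ∈ s, R < ‖x‖ → f z ≤ f x) :
    ∃ y ∈ s, sInf (f '' (s ∩ Metric.closedBall 0 R)) = f y ∧ IsMinOn f s y := by
  obtain ⟨y, hy, hyeq, hymin⟩ :=
    ((isCompact_closedBall 0 R).inter_left hs).exists_sInf_image_eq_and_le
      ⟨z, hz, mem_closedBall_zero_iff.2 hzR⟩ hf.continuousOn
  refine ⟨y, hy.1, hyeq, isMinOn_iff.2 fun x hx => ?_⟩
  by_cases hxR : ‖x‖ ≤ R
  · exact hymin x ⟨hx, mem_closedBall_zero_iff.2 hxR⟩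
  · exact (hymin z ⟨hz, mem_closedBall_zero_iff.2 hzR⟩).trans (hfar x hx (not_le.1 hxR))

lemma exists_isMinOn_union_mem_left_mem_right [ProperSpace E] {F : ℝ → E → ℝ}
    (hF : Continuous ↿F) {S T : Set E} (hS : IsClosed S) (hT : IsClosed T) {a b : E} {R : ℝ}
    (ha : a ∈ S) (hb : b ∈ T) (haR : ‖a‖ ≤ R) (hbR : ‖b‖ ≤ R)
    (hfarS : ∀ t ∈ Icc (0 : ℝ) 1, ∀ x ∈ S, R < ‖x‖ → F t a ≤ F t x)
    (hfarT : ∀ t ∈ Icc (0 : ℝ) 1, ∀ x ∈ T, R < ‖x‖ → F t b ≤ F t x)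
    (h0 : ∀ x ∈ S, F 0 b ≤ F 0 x) (h1 : ∀ x ∈ T, F 1 a ≤ F 1 x) :
    ∃ t ∈ Icc (0 : ℝ) 1, ∃ y ∈ S, ∃ y' ∈ T, IsMinOn (F t) (S ∪ T) y ∧ IsMinOn (F t) (S ∪ T) y' := by
  let m : Set E → ℝ → ℝ := fun s t => sInf (F t '' (s ∩ Metric.closedBall 0 R))
  have hm : ∀ s, IsClosed s → Continuous (m s) := fun s hs =>
    ((isCompact_closedBall 0 R).inter_left hs).continuous_sInf hF
  have hcont : ∀ t, Continuous (F t) := fun t => hF.comp (Continuous.prodMk_right t)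
  have hminS : ∀ t ∈ Icc (0 : ℝ) 1, ∃ y ∈ S, m S t = F t y ∧ IsMinOn (F t) S y := fun t ht =>
    exists_eq_sInf_isMinOn_of_far (hcont t) hS ha haR (hfarS t ht)
  have hminT : ∀ t ∈ Icc (0 : ℝ) 1, ∃ y ∈ T, m T t = F t y ∧ IsMinOn (F t) T y := fun t ht =>
    exists_eq_sInf_isMinOn_of_far (hcont t) hT hb hbR (hfarT t ht)
  have hg0 : m T 0 ≤ m S 0 := by
    obtain ⟨y, hy, hyeq, -⟩ := hminS 0 ⟨le_rfl, zero_le_one⟩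
    obtain ⟨y', -, hy'eq, hy'min⟩ := hminT 0 ⟨le_rfl, zero_le_one⟩
    rw [hyeq, hy'eq]
    exact (hy'min hb).trans (h0 y hy)
  have hg1 : m S 1 ≤ m T 1 := by
    obtain ⟨y, -, hyeq, hymin⟩ := hminS 1 ⟨zero_le_one, le_rfl⟩
    obtain ⟨y', hy', hy'eq, -⟩ := hminT 1 ⟨zero_le_one, le_rfl⟩
    rw [hyeq, hy'eq]
    exact (hymin ha).trans (h1 y' hy')
  obtain ⟨t, ht, hgt⟩ := intermediate_value_Icc' zero_le_one
    ((hm S hS).sub (hm T hT)).continuousOn ⟨sub_nonpos.2 hg1, sub_nonneg.2 hg0⟩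
  obtain ⟨y, hy, hyeq, hymin⟩ := hminS t ht
  obtain ⟨y', hy', hy'eq, hy'min⟩ := hminT t ht
  have hyy' : F t y = F t y' := by
    rw [← hyeq, ← hy'eq]
    exact sub_eq_zero.1 hgt
  refine ⟨t, ht, y, hy, y', hy', ?_, ?_⟩ <;> rintro x (hx | hx)
  · exact hymin hx
  · exact hyy'.trans_le (hy'min hx)
  · exact hyy'.symm.trans_le (hymin hx)
  · exact hy'min hx

variable [NormedSpace ℝ E]

lemma exists_supporting_mem_segment {Q : Set E} (hQc : Convex ℝ Q) (hQ : IsClosed Q) {u p : E}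
    (hu : u ∉ Q) (hp : p ∈ interior Q) :
    ∃ q ∈ segment ℝ u p, q ∈ Q ∧
      ∃ f : StrongDual ℝ E, (∀ x ∈ Q, f q ≤ f x) ∧ f u < f q := by
  -- the segment is connected, so it meets the frontier of `Q`
  obtain ⟨q, hqseg, hqQ, hqint⟩ : ∃ q ∈ segment ℝ u p, q ∈ Q ∧ q ∉ interior Q := by
    by_contra! h
    obtain ⟨x, -, hxint, hxQ⟩ := (convex_segment u p).isPreconnected (interior Q) Qᶜ
      isOpen_interior hQ.isOpen_compl
      (fun x hx => (em (x ∈ Q)).imp (h x hx) id)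
      ⟨p, right_mem_segment ℝ u p, hp⟩ ⟨u, left_mem_segment ℝ u p, hu⟩
    exact hxQ (interior_subset hxint)
  obtain ⟨f, hf⟩ := geometric_hahn_banach_open_point hQc.interior isOpen_interior hqint
  have hfQ : ∀ x ∈ Q, f x ≤ f q := by
    intro x hx
    have hx' : x ∈ closure (interior Q) := by
      rw [hQc.closure_interior_eq_closure_of_nonempty_interior ⟨p, hp⟩]
      exact subset_closure hx
    exact closure_minimal (fun y hy => (hf y hy).le) (isClosed_le f.continuous continuous_const) hx'
  have hfu : f q < f u := by
    obtain ⟨α, β, hα, hβ, hαβ, rfl⟩ := hqseg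
    obtain rfl : α = 1 - β := by linarith
    have hfp := hf p hp
    simp only [map_add, map_smul, smul_eq_mul] at hfp ⊢
    by_contra! hfu
    obtain rfl : β = 0 := by nlinarith
    exact hu (by simpa using hqQ)
  exact ⟨q, hqseg, hqQ, -f, fun x hx => by simpa using hfQ x hx, by simpa using hfu⟩

lemma exists_mem_eq_of_forall_le_of_mem_convexHull {S T : Set E} (hS : Convex ℝ S)
    (hT : Convex ℝ T) (hSne : S.Nonempty) (hTne : T.Nonempty) {f : StrongDual ℝ E} {q : E}
    (hq : q ∈ convexHull ℝ (S ∪ T)) (hqS : q ∉ S) (hmin : ∀ x ∈ S ∪ T, f q ≤ f x) :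
    ∃ b ∈ T, f b = f q := by
  rw [convexHull_union hSne hTne, hS.convexHull_eq, hT.convexHull_eq, mem_convexJoin] at hq
  obtain ⟨a, ha, b, hb, α, β, hα, hβ, hαβ, rfl⟩ := hq
  obtain rfl : α = 1 - β := by linarith
  refine ⟨b, hb, le_antisymm ?_ (hmin b (Or.inr hb))⟩
  have hβ0 : 0 < β := by
    refine lt_of_le_of_ne hβ ?_
    rintro rfl
    exact hqS (by simpa using ha)
  have hfa := hmin a (Or.inl ha)
  simp only [map_add, map_smul, smul_eq_mul] at hfa ⊢
  nlinarith

lemma exists_mem_interior_lt {s : Set E} {f : StrongDual ℝ E} {a y : E} (ha : a ∈ interior s)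
    (hy : f y < f a) : ∃ x ∈ interior s, f a < f x := by
  have hcont : Tendsto (fun t : ℝ => a + t • (a - y)) (𝓝 0) (𝓝 a) := by
    simpa using ((continuous_id.smul continuous_const).const_add a).tendsto (0 : ℝ)
  obtain ⟨t, hts, ht⟩ := (((hcont.eventually (isOpen_interior.mem_nhds ha)).filter_mono
    nhdsWithin_le_nhds).and eventually_mem_nhdsWithin).exists (f := 𝓝[>] (0 : ℝ))
  refine ⟨_, hts, ?_⟩
  simp only [map_add, map_smul, map_sub, smul_eq_mul]
  nlinarith [mem_Ioi.1 ht]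

lemma exists_strongDual_pos_of_isCompact {s : Set E} (hs : IsCompact s)
    (h : ∀ x ∈ s, ∃ f : StrongDual ℝ E, (∀ y ∈ s, 0 ≤ f y) ∧ 0 < f x) :
    ∃ f : StrongDual ℝ E, ∀ x ∈ s, 0 < f x := by
  choose! g hgs hgx using h
  obtain ⟨t, ht⟩ := hs.elim_finite_subcover (fun x : s => {y | 0 < g x y})
    (fun x => isOpen_lt continuous_const (g x).continuous)
    (fun y hy => mem_iUnion.2 ⟨⟨y, hy⟩, hgx y hy⟩)
  refine ⟨∑ x ∈ t, g x, fun y hy => ?_⟩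
  obtain ⟨x, hxt, hxy⟩ := mem_iUnion₂.1 (ht hy)
  rw [sum_apply]
  exact hxy.trans_le (Finset.single_le_sum (fun (z : s) _ => hgs z z.2 y hy) hxt)

lemma exists_mul_norm_le_of_salient [ProperSpace E] {K : Set E} (hKclosed : IsClosed K)
    (hKconv : Convex ℝ K) (hKcone : ∀ x ∈ K, ∀ t : ℝ, 0 ≤ t → t • x ∈ K)
    (hKsalient : ∀ x ∈ K, -x ∈ K → x = 0) :
    ∃ (e : StrongDual ℝ E) (δ : ℝ), 0 < δ ∧ ∀ x ∈ K, δ * ‖x‖ ≤ e x := by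
  have hsphere : IsCompact (K ∩ Metric.sphere 0 1) := (isCompact_sphere 0 1).inter_left hKclosed
  obtain ⟨e, he⟩ := exists_strongDual_pos_of_isCompact hsphere fun x hx => by
    let C : ProperCone ℝ E :=
      { carrier := K
        zero_mem' := by simpa using hKcone x hx.1 0 le_rfl
        add_mem' := fun {y z} hy hz => by
          simpa [smul_add, smul_smul] using hKcone _
            (hKconv hy hz (by norm_num : (0 : ℝ) ≤ 1 / 2) (by norm_num : (0 : ℝ) ≤ 1 / 2)
              (by norm_num)) 2 (by norm_num)
        smul_mem' := fun c y hy => hKcone y hy c c.2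
        isClosed' := hKclosed }
    have hnx : -x ∉ C := fun h => by
      simpa [hKsalient x hx.1 h] using hx.2
    obtain ⟨f, hfC, hfx⟩ := C.hyperplane_separation_point hnx
    exact ⟨f, fun y hy => hfC y hy.1, by simpa using hfx⟩
  obtain ⟨δ, hδ, hδe⟩ := hsphere.exists_forall_le' e.continuous.continuousOn he
  refine ⟨e, δ, hδ, fun x hx => ?_⟩
  rcases eq_or_ne x 0 with rfl | hx0
  · simp
  have hxn : 0 < ‖x‖ := norm_pos_iff.2 hx0
  have := hδe (‖x‖⁻¹ • x) ⟨hKcone x hx _ (inv_nonneg.2 hxn.le), by simp [norm_smul, hxn.ne']⟩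
  rw [map_smul, smul_eq_mul, le_inv_mul_iff₀ hxn] at this
  linarith

def TightSeparates (S T : Set E) (u : E) (μ : StrongDual ℝ E) : Prop :=
  ∃ a ∈ S, ∃ b ∈ T, IsMinOn μ (S ∪ T) a ∧ IsMinOn μ (S ∪ T) b ∧ μ u < μ a

lemma TightSeparates.symm {S T : Set E} {u : E} {μ : StrongDual ℝ E}
    (h : TightSeparates S T u μ) : TightSeparates T S u μ := by
  obtain ⟨a, ha, b, hb, hμa, hμb, hμu⟩ := h
  rw [union_comm] at hμa hμb
  exact ⟨b, hb, a, ha, hμb, hμa, hμu.trans_eq (le_antisymm (hμa (Or.inl hb)) (hμb (Or.inr ha)))⟩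

lemma exists_tightSeparates_of_coercive [ProperSpace E] {S T : Set E} (hS : IsClosed S)
    (hT : IsClosed T) {u a b : E} {A B : StrongDual ℝ E} {cA cB ηA ηB : ℝ} (hηA : 0 < ηA)
    (hηB : 0 < ηB) (hAco : ∀ x ∈ S ∪ T, cA + ηA * ‖x‖ ≤ A x)
    (hBco : ∀ x ∈ S ∪ T, cB + ηB * ‖x‖ ≤ B x) (hAu : ∀ x ∈ S ∪ T, A u < A x)
    (hBu : ∀ x ∈ S ∪ T, B u < B x) (ha : a ∈ S) (hb : b ∈ T) (hAb : ∀ x ∈ S, A b ≤ A x)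
    (hBa : ∀ x ∈ T, B a ≤ B x) : ∃ μ, TightSeparates S T u μ := by
  let F : ℝ → E → ℝ := fun t x => (1 - t) * A x + t * B x
  set c := min cA cB
  set η := min ηA ηB
  set M := max (max (A a) (B a)) (max (A b) (B b))
  set R := (M - c) / η
  have hco : ∀ t ∈ Icc (0 : ℝ) 1, ∀ x ∈ S ∪ T, c + η * ‖x‖ ≤ F t x := by
    intro t ht x hx
    have h1 : c + η * ‖x‖ ≤ A x := (hAco x hx).trans' (add_le_add (min_le_left _ _)
      (mul_le_mul_of_nonneg_right (min_le_left _ _) (norm_nonneg x)))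
    have h2 : c + η * ‖x‖ ≤ B x := (hBco x hx).trans' (add_le_add (min_le_right _ _)
      (mul_le_mul_of_nonneg_right (min_le_right _ _) (norm_nonneg x)))
    nlinarith [mul_nonneg (sub_nonneg.2 ht.2) (sub_nonneg.2 h1), mul_nonneg ht.1 (sub_nonneg.2 h2)]
  have hM : ∀ t ∈ Icc (0 : ℝ) 1, F t a ≤ M ∧ F t b ≤ M := by
    intro t ht
    have hcombo : ∀ x, A x ≤ M → B x ≤ M → F t x ≤ M := fun x hA hB => by
      nlinarith [mul_nonneg (sub_nonneg.2 ht.2) (sub_nonneg.2 hA),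
        mul_nonneg ht.1 (sub_nonneg.2 hB)]
    exact ⟨hcombo a (by simp [M]) (by simp [M]), hcombo b (by simp [M]) (by simp [M])⟩
  have hfar : ∀ t ∈ Icc (0 : ℝ) 1, ∀ x ∈ S ∪ T, R < ‖x‖ → M < F t x := by
    intro t ht x hx hxR
    rw [div_lt_iff₀ (lt_min hηA hηB)] at hxR
    linarith [hco t ht x hx]
  have hR : ∀ x ∈ S ∪ T, F 0 x ≤ M → ‖x‖ ≤ R := fun x hx hxM =>
    not_lt.1 fun hxR => (hfar 0 ⟨le_rfl, zero_le_one⟩ x hx hxR).not_ge hxM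
  obtain ⟨t, ht, y, hy, y', hy', hmin, hmin'⟩ := exists_isMinOn_union_mem_left_mem_right
    (F := F) (by fun_prop) hS hT ha hb (hR a (.inl ha) (hM 0 ⟨le_rfl, zero_le_one⟩).1)
    (hR b (.inr hb) (hM 0 ⟨le_rfl, zero_le_one⟩).2)
    (fun t ht x hx hxR => (hM t ht).1.trans (hfar t ht x (.inl hx) hxR).le)
    (fun t ht x hx hxR => (hM t ht).2.trans (hfar t ht x (.inr hx) hxR).le)
    (by simpa [F] using hAb) (by simpa [F] using hBa)
  have hμ : ⇑((1 - t) • A + t • B) = F t := by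
    ext x
    simp [F]
  refine ⟨(1 - t) • A + t • B, y, hy, y', hy', hμ ▸ hmin, hμ ▸ hmin', ?_⟩
  have hA := sub_pos.2 (hAu y (.inl hy))
  have hB := sub_pos.2 (hBu y (.inl hy))
  rw [hμ]
  nlinarith [mul_nonneg (sub_nonneg.2 ht.2) hA.le, mul_nonneg ht.1 hB.le, ht.1, ht.2]

lemma tightSeparates_or_exists_coercive [ProperSpace E] {K S T : Set E} (hS : IsClosed S)
    (hSc : Convex ℝ S) (hTc : Convex ℝ T) (hSne : S.Nonempty) (hTne : T.Nonempty)
    (hQ : IsClosed (convexHull ℝ (S ∪ T))) (hSTK : S ∪ T ⊆ K) {e : StrongDual ℝ E} {δ : ℝ}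
    (hδ : 0 < δ) (he : ∀ x ∈ K, δ * ‖x‖ ≤ e x) {u p : E}
    (huQ : u ∉ convexHull ℝ (S ∪ T)) (hp : p ∈ interior (convexHull ℝ (S ∪ T)))
    (hpS : Disjoint (segment ℝ u p) S) :
    (∃ μ, TightSeparates S T u μ) ∨
      ∃ (A : StrongDual ℝ E) (c η : ℝ), 0 < η ∧ (∀ x ∈ S ∪ T, c + η * ‖x‖ ≤ A x) ∧
        (∀ x ∈ S ∪ T, A u < A x) ∧ ∃ b ∈ T, ∀ x ∈ S, A b ≤ A x := by
  obtain ⟨q, hqseg, hqQ, w, hwq, hwu⟩ :=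
    exists_supporting_mem_segment (convex_convexHull ℝ _) hQ huQ hp
  have hwq' : ∀ x ∈ S ∪ T, w q ≤ w x := fun x hx => hwq x (subset_convexHull ℝ _ hx)
  obtain ⟨b, hb, hwb⟩ := exists_mem_eq_of_forall_le_of_mem_convexHull hSc hTc hSne hTne hqQ
    (hpS.notMem_of_mem_left hqseg) hwq'
  rw [← hwb] at hwq' hwu
  by_cases htight : ∃ a ∈ S, w a ≤ w b
  · obtain ⟨a, ha, hab⟩ := htight
    have hwa : w a = w b := le_antisymm hab (hwq' a (Or.inl ha))
    exact .inl ⟨w, a, ha, b, hb, fun x hx => hwa ▸ hwq' x hx, hwq', hwa ▸ hwu⟩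
  push Not at htight
  have hsmall : ∀ᶠ ε in 𝓝[>] (0 : ℝ), ε * e u < w b - w u :=
    (((continuous_id.mul continuous_const).tendsto' (0 : ℝ) 0 (zero_mul _)).eventually
      (gt_mem_nhds (sub_pos.2 hwu))).filter_mono nhdsWithin_le_nhds
  have hgap := eventually_lt_add_mul hS hδ (fun x hx => he x (hSTK (.inl hx))) w.continuous htight
  obtain ⟨ε, ⟨hεS, hεu⟩, hε⟩ := (hgap.and hsmall |>.and self_mem_nhdsWithin).exists
  have hε : 0 < ε := hε
  have hA : ∀ x, (w + ε • e) x = w x + ε * e x := fun x => by simp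
  have heK : ∀ x ∈ S ∪ T, ε * δ * ‖x‖ ≤ ε * e x := fun x hx => by
    rw [mul_assoc]
    exact mul_le_mul_of_nonneg_left (he x (hSTK hx)) hε.le
  refine .inr ⟨w + ε • e, w b, ε * δ, mul_pos hε hδ, fun x hx => ?_, fun x hx => ?_, b, hb,
    fun x hx => ?_⟩
  · rw [hA]
    linarith [hwq' x hx, heK x hx]
  · rw [hA, hA]
    linarith [hwq' x hx, heK x hx, mul_nonneg (mul_nonneg hε.le hδ.le) (norm_nonneg x)]
  · rw [hA, hA]
    exact (hεS x hx).le

theorem exists_tightSeparates_of_mem_interior [ProperSpace E] {K S T : Set E} (hS : IsClosed S)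
    (hT : IsClosed T) (hSc : Convex ℝ S) (hTc : Convex ℝ T) (hSne : S.Nonempty)
    (hTne : T.Nonempty) (hQ : IsClosed (convexHull ℝ (S ∪ T))) (hSTK : S ∪ T ⊆ K)
    {e : StrongDual ℝ E} {δ : ℝ} (hδ : 0 < δ) (he : ∀ x ∈ K, δ * ‖x‖ ≤ e x) {u p p' : E}
    (huQ : u ∉ convexHull ℝ (S ∪ T)) (hp : p ∈ interior (convexHull ℝ (S ∪ T)))
    (hpS : Disjoint (segment ℝ u p) S) (hp' : p' ∈ interior (convexHull ℝ (S ∪ T)))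
    (hp'T : Disjoint (segment ℝ u p') T) : ∃ μ, TightSeparates S T u μ := by
  obtain h | ⟨A, cA, ηA, hηA, hAco, hAu, b, hb, hAb⟩ :=
    tightSeparates_or_exists_coercive hS hSc hTc hSne hTne hQ hSTK hδ he huQ hp hpS
  · exact h
  rw [union_comm] at hQ huQ hp' hSTK
  obtain ⟨μ, hμ⟩ | ⟨B, cB, ηB, hηB, hBco, hBu, a, ha, hBa⟩ :=
    tightSeparates_or_exists_coercive hT hTc hSc hTne hSne hQ hSTK hδ he huQ hp' hp'T
  · exact ⟨μ, hμ.symm⟩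
  rw [union_comm] at hBco hBu
  exact exists_tightSeparates_of_coercive hS hT hηA hηB hAco hBco hAu hBu ha hb hAb hBa

lemma exists_mem_interior_disjoint_segment {K : Set E} (hK : Convex ℝ K) {f g : StrongDual ℝ E}
    {r s : ℝ} {u a b : E} (ha : a ∈ {x ∈ K | s ≤ g x} ∩ interior K) (hgu : g u < s)
    (hb : b ∈ {x ∈ K | s ≤ g x} \ {x ∈ K | r ≤ f x}) (hfu : f u < r) :
    ∃ p ∈ interior {x ∈ K | s ≤ g x}, Disjoint (segment ℝ u p) {x ∈ K | r ≤ f x} := by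
  obtain ⟨a', ha'K, ha'g⟩ := exists_mem_interior_lt ha.2 (hgu.trans_le ha.1.2)
  have hconv : Convex ℝ {x ∈ K | s ≤ g x} := hK.inter (convex_halfSpace_ge g.isLinear s)
  have ha' : a' ∈ interior {x ∈ K | s ≤ g x} :=
    interior_maximal (fun x hx => mem_sep (interior_subset hx.1) (le_of_lt hx.2))
      (isOpen_interior.inter (isOpen_lt continuous_const g.continuous))
      (show a' ∈ interior K ∩ {x | s < g x} from ⟨ha'K, ha.1.2.trans_lt ha'g⟩)
  have hb' : b ∈ closure (interior {x ∈ K | s ≤ g x}) := by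
    rw [hconv.closure_interior_eq_closure_of_nonempty_interior ⟨a', ha'⟩]
    exact subset_closure hb.1
  have hbf : f b < r := not_le.1 fun h => hb.2 ⟨hb.1.1, h⟩
  obtain ⟨p, hp, hpf⟩ := (closure_inter_open_nonempty_iff
    (isOpen_lt f.continuous continuous_const)).1 ⟨b, hb', hbf⟩
  refine ⟨p, hp, disjoint_left.2 fun x hx hxr => ?_⟩
  exact ((convex_halfSpace_lt f.isLinear r).segment_subset hfu hpf hx).not_ge hxr.2

theorem exists_tightSeparates_of_cone [ProperSpace E] {K : Set E} (hKclosed : IsClosed K)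
    (hKconv : Convex ℝ K) (hKcone : ∀ x ∈ K, ∀ t : ℝ, 0 ≤ t → t • x ∈ K)
    (hKsalient : ∀ x ∈ K, -x ∈ K → x = 0) {f₁ f₂ : StrongDual ℝ E} {r₁ r₂ : ℝ}
    {S T : Set E} (hS : S = {x ∈ K | r₁ ≤ f₁ x}) (hT : T = {x ∈ K | r₂ ≤ f₂ x})
    (hST : ¬ S ⊆ T) (hTS : ¬ T ⊆ S) (hSint : (S ∩ interior K).Nonempty)
    (hTint : (T ∩ interior K).Nonempty) (hQ : IsClosed (convexHull ℝ (S ∪ T))) {u : E}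
    (hu : u ∈ K \ convexHull ℝ (S ∪ T)) : ∃ μ, TightSeparates S T u μ := by
  subst hS hT
  obtain ⟨e, δ, hδ, he⟩ := exists_mul_norm_le_of_salient hKclosed hKconv hKcone hKsalient
  have hf₁u : f₁ u < r₁ := not_le.1 fun h => hu.2 (subset_convexHull ℝ _ (Or.inl ⟨hu.1, h⟩))
  have hf₂u : f₂ u < r₂ := not_le.1 fun h => hu.2 (subset_convexHull ℝ _ (Or.inr ⟨hu.1, h⟩))
  obtain ⟨a₁, ha₁⟩ := hSint
  obtain ⟨a₂, ha₂⟩ := hTint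
  obtain ⟨b₁, hb₁⟩ := not_subset.1 hST
  obtain ⟨b₂, hb₂⟩ := not_subset.1 hTS
  obtain ⟨p, hp, hpS⟩ := exists_mem_interior_disjoint_segment hKconv ha₂ hf₂u hb₂ hf₁u
  obtain ⟨p', hp', hp'T⟩ := exists_mem_interior_disjoint_segment hKconv ha₁ hf₁u hb₁ hf₂u
  exact exists_tightSeparates_of_mem_interior
    (hKclosed.inter (isClosed_le continuous_const f₁.continuous))
    (hKclosed.inter (isClosed_le continuous_const f₂.continuous))
    (hKconv.inter (convex_halfSpace_ge f₁.isLinear r₁))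
    (hKconv.inter (convex_halfSpace_ge f₂.isLinear r₂)) ⟨a₁, ha₁.1⟩ ⟨a₂, ha₂.1⟩ hQ
    (union_subset (fun x hx => hx.1) (fun x hx => hx.1)) hδ he hu.2
    (interior_mono (subset_union_right.trans (subset_convexHull ℝ _)) hp) hpS
    (interior_mono (subset_union_left.trans (subset_convexHull ℝ _)) hp') hp'T

end

noncomputable def dotL {n : ℕ} (c : Fin n → ℝ) : StrongDual ℝ (Fin n → ℝ) :=
  LinearMap.toContinuousLinearMap (dotProductEquiv ℝ (Fin n) c)

lemma exists_dot_eq {n : ℕ} (μ : StrongDual ℝ (Fin n → ℝ)) : ∃ v, ∀ x, dot v x = μ x :=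
  ⟨(dotProductEquiv ℝ (Fin n)).symm μ.toLinearMap, fun x =>
    LinearMap.congr_fun ((dotProductEquiv ℝ (Fin n)).apply_symm_apply μ.toLinearMap) x⟩

theorem stmt_14_general {n : ℕ} (K : Set (Fin n → ℝ))
    (hKclosed : IsClosed K) (hKconv : Convex ℝ K)
    (hKcone : ∀ x ∈ K, ∀ t : ℝ, 0 ≤ t → t • x ∈ K)
    (hKpointed : ∀ x, x ∈ K → -x ∈ K → x = 0)
    (c₁ c₂ : Fin n → ℝ) (c₁₀ c₂₀ : ℝ)
    (C₁ C₂ : Set (Fin n → ℝ))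
    (hC₁ : C₁ = {x ∈ K | c₁₀ ≤ dot c₁ x})
    (hC₂ : C₂ = {x ∈ K | c₂₀ ≤ dot c₂ x})
    (h12 : ¬ C₁ ⊆ C₂) (h21 : ¬ C₂ ⊆ C₁)
    (hsf₁ : (C₁ ∩ interior K).Nonempty)
    (hsf₂ : (C₂ ∩ interior K).Nonempty)
    (hclosed : IsClosed (convexHull ℝ (C₁ ∪ C₂))) :
    ∀ u ∈ K \ convexHull ℝ (C₁ ∪ C₂),
      ∃ (μ : Fin n → ℝ) (μ₀ : ℝ),
        (∀ x ∈ convexHull ℝ (C₁ ∪ C₂), μ₀ ≤ dot μ x) ∧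
        dot μ u < μ₀ ∧
        (∃ x₁ ∈ C₁, dot μ x₁ = μ₀) ∧ (∃ x₂ ∈ C₂, dot μ x₂ = μ₀) := by
  intro u hu
  obtain ⟨μ, a, ha, b, hb, hμa, hμb, hμu⟩ := exists_tightSeparates_of_cone hKclosed hKconv hKcone
    hKpointed (f₁ := dotL c₁) (f₂ := dotL c₂) hC₁ hC₂ h12 h21 hsf₁ hsf₂ hclosed hu
  obtain ⟨v, hv⟩ := exists_dot_eq μ
  refine ⟨v, μ a, fun x hx => ?_, by rwa [hv], ⟨a, ha, hv a⟩, ⟨b, hb, ?_⟩⟩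
  · rw [hv]
    exact convexHull_min hμa (convex_halfSpace_ge μ.isLinear (μ a)) hx
  · rw [hv]
    exact le_antisymm (hμb (Or.inl ha)) (hμa (Or.inr hb))

theorem stmt_14 {n : ℕ} (K : Set (Fin n → ℝ))
    (hKclosed : IsClosed K) (hKconv : Convex ℝ K)
    (hKcone : ∀ x ∈ K, ∀ t : ℝ, 0 ≤ t → t • x ∈ K)
    (hKpointed : ∀ x, x ∈ K → -x ∈ K → x = 0)
    (hKfull : (interior K).Nonempty)
    (c₁ c₂ : Fin n → ℝ) (c₁₀ c₂₀ : ℝ)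
    (hc₁₀ : c₁₀ = 0 ∨ c₁₀ = 1 ∨ c₁₀ = -1)
    (hc₂₀ : c₂₀ = 0 ∨ c₂₀ = 1 ∨ c₂₀ = -1)
    (C₁ C₂ : Set (Fin n → ℝ))
    (hC₁ : C₁ = {x ∈ K | c₁₀ ≤ dot c₁ x})
    (hC₂ : C₂ = {x ∈ K | c₂₀ ≤ dot c₂ x})
    (h12 : ¬ C₁ ⊆ C₂) (h21 : ¬ C₂ ⊆ C₁)
    (hsf₁ : (C₁ ∩ interior K).Nonempty)
    (hsf₂ : (C₂ ∩ interior K).Nonempty)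
    (hclosed : IsClosed (convexHull ℝ (C₁ ∪ C₂)))
    (hneK : convexHull ℝ (C₁ ∪ C₂) ≠ K) :
    ∀ u ∈ K \ convexHull ℝ (C₁ ∪ C₂),
      ∃ (μ : Fin n → ℝ) (μ₀ : ℝ),
        (∀ x ∈ convexHull ℝ (C₁ ∪ C₂), μ₀ ≤ dot μ x) ∧
        dot μ u < μ₀ ∧
        (∃ x₁ ∈ C₁, dot μ x₁ = μ₀) ∧ (∃ x₂ ∈ C₂, dot μ x₂ = μ₀) :=
  stmt_14_general K hKclosed hKconv hKcone hKpointed c₁ c₂ c₁₀ c₂₀ C₁ C₂ hC₁ hC₂ h12 h21 hsf₁ hsf₂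
    hclosed
end
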